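/- arXiv:1303.5217 — 11 statements merged into one kernel-verified Lean document; each statement's English description precedes it below -/
import Mathlib

section
/- Let a ∈ ℝ and let (P_n) and (C_n) be sequences of real numbers satisfying the dual pivot quicksort recurrence C_n = P_n + (6/(n(n-1))) · Σ_{k=0}^{n-2} (n-k-1)·C_k for all n ≥ 2 (with C_0, C_1 arbitrary fixed reals). If P_n = a·n + O(1), i.e. there is a constant K with |P_n − a·n| ≤ K for all n ≥ 2, then C_n = (6/5)·a·n·ln n + O(n), i.e. there is a constant K' with |C_n − (6/5)·a·n·ln n| ≤ K'·n for all n ≥ 2. -/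
/-! The sequence `x k = (k + 1) H_k` solves the recurrence exactly with toll `(5 n + 17) / 6`, so
`D = C - (6/5) a x` satisfies the same recurrence with a bounded toll `B`. A bounded toll only
produces linear growth: the averaging operator sends `k + 1` to `n + 1` and a constant `c` to `3 c`,
so `K (k + 1) - B / 2` is a supersolution once `K` dominates `D 0` and `D 1`. Finally
`H_n = log n + O(1)`. -/

open Finset

noncomputable def dualPivotAverage (x : ℕ → ℝ) (n : ℕ) : ℝ :=
  6 / ((n : ℝ) * ((n : ℝ) - 1)) *
    ∑ k ∈ Finset.range (n - 1), (((n : ℝ) - (k : ℝ) - 1) * x k)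

theorem dualPivotAverage_succ (x : ℕ → ℝ) (m : ℕ) :
    dualPivotAverage x (m + 1) = 6 / ((m + 1) * m) * ∑ k ∈ range m, ((m : ℝ) - k) * x k := by
  simp only [dualPivotAverage, Nat.add_sub_cancel, Nat.cast_add, Nat.cast_one,
    add_sub_cancel_right]
  congr 1
  exact sum_congr rfl fun k _ => by ring

theorem dualPivotAverage_sub (x y : ℕ → ℝ) (n : ℕ) :
    dualPivotAverage (fun k => x k - y k) n = dualPivotAverage x n - dualPivotAverage y n := by
  simp only [dualPivotAverage, mul_sub, sum_sub_distrib]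

theorem dualPivotAverage_const_mul (c : ℝ) (x : ℕ → ℝ) (n : ℕ) :
    dualPivotAverage (fun k => c * x k) n = c * dualPivotAverage x n := by
  simp only [dualPivotAverage, mul_left_comm _ c, ← mul_sum]

theorem dualPivotAverage_mono {x y : ℕ → ℝ} {n : ℕ} (h : ∀ k < n, x k ≤ y k) :
    dualPivotAverage x n ≤ dualPivotAverage y n := by
  have hw : 0 ≤ 6 / ((n : ℝ) * ((n : ℝ) - 1)) := by
    rcases n with _ | n
    · simp
    · push_cast; rw [add_sub_cancel_right]; positivity
  refine mul_le_mul_of_nonneg_left (sum_le_sum fun k hk => ?_) hw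
  have hk : k + 1 < n := by have := mem_range.mp hk; omega
  have hk' : (k : ℝ) + 1 ≤ n := by exact_mod_cast hk.le
  exact mul_le_mul_of_nonneg_left (h k (by omega)) (by linarith)

theorem abs_dualPivotAverage_le (x : ℕ → ℝ) (n : ℕ) :
    |dualPivotAverage x n| ≤ dualPivotAverage (fun k => |x k|) n := by
  have hneg : dualPivotAverage (fun k => -|x k|) n = -dualPivotAverage (fun k => |x k|) n := by
    simpa using dualPivotAverage_const_mul (-1) (fun k => |x k|) n
  refine abs_le.mpr ⟨?_, dualPivotAverage_mono fun k _ => le_abs_self (x k)⟩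
  rw [← hneg]
  exact dualPivotAverage_mono fun k _ => neg_abs_le (x k)

theorem sum_range_succ_sub_mul (x : ℕ → ℝ) (m : ℕ) :
    ∑ k ∈ range (m + 1), (((m + 1 : ℕ) : ℝ) - k) * x k
      = ∑ k ∈ range m, ((m : ℝ) - k) * x k + ∑ k ∈ range (m + 1), x k := by
  rw [sum_range_succ, sum_range_succ, ← add_assoc, ← sum_add_distrib]
  push_cast
  congr 1
  · exact sum_congr rfl fun k _ => by ring
  · ring

theorem sum_range_sub_mul_affine (c d : ℝ) (m : ℕ) :
    ∑ k ∈ range m, ((m : ℝ) - k) * (c * k + d)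
      = c * ((m - 1) * m * (m + 1) / 6) + d * (m * (m + 1) / 2) := by
  have partial_sum (m : ℕ) : ∑ k ∈ range m, (c * k + d) = c * (m * (m - 1) / 2) + d * m := by
    induction m with
    | zero => simp
    | succ m ih => rw [sum_range_succ, ih]; push_cast; ring
  induction m with
  | zero => simp
  | succ m ih => rw [sum_range_succ_sub_mul, ih, partial_sum]; push_cast; ring

theorem sum_range_succ_mul_harmonic (m : ℕ) :
    ∑ k ∈ range m, ((k : ℝ) + 1) * harmonic k
      = m * (m + 1) / 2 * harmonic m - m * (m + 3) / 4 := by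
  induction m with
  | zero => simp
  | succ m ih =>
    rw [sum_range_succ, ih, harmonic_succ]
    push_cast
    field_simp
    ring

theorem sum_range_sub_mul_succ_mul_harmonic (m : ℕ) :
    ∑ k ∈ range m, ((m : ℝ) - k) * (((k : ℝ) + 1) * harmonic k)
      = m * (m + 1) * (m + 2) / 6 * harmonic (m + 1) - m * (m + 1) * (5 * m + 22) / 36 := by
  induction m with
  | zero => simp
  | succ m ih =>
    rw [sum_range_succ_sub_mul, ih, sum_range_succ_mul_harmonic, harmonic_succ (m + 1)]
    push_cast
    field_simp
    ring

theorem dualPivotAverage_affine (c d : ℝ) {n : ℕ} (hn : 2 ≤ n) :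
    dualPivotAverage (fun k => c * k + d) n = c * (n - 2) + 3 * d := by
  obtain ⟨m, rfl⟩ : ∃ m, n = m + 1 := ⟨n - 1, by omega⟩
  have hm : (m : ℝ) ≠ 0 := by norm_cast; omega
  rw [dualPivotAverage_succ, sum_range_sub_mul_affine]
  push_cast
  field_simp
  ring

theorem dualPivotAverage_succ_mul_harmonic {n : ℕ} (hn : 2 ≤ n) :
    dualPivotAverage (fun k => (k + 1) * harmonic k) n
      = (n + 1) * harmonic n - (5 * n + 17) / 6 := by
  obtain ⟨m, rfl⟩ : ∃ m, n = m + 1 := ⟨n - 1, by omega⟩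
  have hm : (m : ℝ) ≠ 0 := by norm_cast; omega
  rw [dualPivotAverage_succ, sum_range_sub_mul_succ_mul_harmonic]
  push_cast
  field_simp
  ring

theorem exists_abs_le_mul_succ_of_eq_add_dualPivotAverage {D E : ℕ → ℝ} {B : ℝ}
    (hE : ∀ n, 2 ≤ n → |E n| ≤ B)
    (hD : ∀ n, 2 ≤ n → D n = E n + dualPivotAverage D n) :
    ∃ K, ∀ n : ℕ, |D n| ≤ K * (n + 1) := by
  have hB : 0 ≤ B := (abs_nonneg _).trans (hE 2 le_rfl)
  set K := |D 0| + |D 1| + B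
  suffices h : ∀ n : ℕ, |D n| ≤ K * (n + 1) - B / 2 from
    ⟨K, fun n => (h n).trans (by linarith)⟩
  intro n
  induction n using Nat.strong_induction_on with
  | _ n ih =>
    match n, ih with
    | 0, _ => simp only [K]; push_cast; linarith [abs_nonneg (D 1)]
    | 1, _ => simp only [K]; norm_num; linarith [abs_nonneg (D 0), abs_nonneg (D 1)]
    | n + 2, ih =>
      have hsuper : dualPivotAverage (fun k => K * k + (K - B / 2)) (n + 2)
          = K * ((n + 2 : ℕ) + 1) - 3 * B / 2 := by
        rw [dualPivotAverage_affine K (K - B / 2) (by omega)]; push_cast; ring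
      calc |D (n + 2)| ≤ |E (n + 2)| + |dualPivotAverage D (n + 2)| := by
            rw [hD _ (by omega)]; exact abs_add_le _ _
        _ ≤ B + dualPivotAverage (fun k => K * k + (K - B / 2)) (n + 2) := by
            gcongr
            · exact hE _ (by omega)
            · refine (abs_dualPivotAverage_le D _).trans (dualPivotAverage_mono fun k hk => ?_)
              linarith [ih k hk]
        _ = K * ((n + 2 : ℕ) + 1) - B / 2 := by rw [hsuper]; ring

theorem abs_succ_mul_harmonic_sub_mul_log_le (n : ℕ) :
    |(n + 1) * (harmonic n : ℝ) - n * Real.log n| ≤ 2 * n := by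
  rcases Nat.eq_zero_or_pos n with rfl | hn
  · simp
  have hn' : (1 : ℝ) ≤ n := by exact_mod_cast hn
  have hlog_le : Real.log n ≤ harmonic n :=
    (Real.log_le_log (by positivity) (by push_cast; linarith)).trans (log_add_one_le_harmonic n)
  have hle_log : (harmonic n : ℝ) ≤ 1 + Real.log n := harmonic_le_one_add_log n
  have hlog : Real.log n ≤ n - 1 := Real.log_le_sub_one_of_pos (by positivity)
  have hlog0 : 0 ≤ Real.log n := Real.log_nonneg hn'
  rw [abs_le]
  constructor <;> nlinarith

/-- Solving the dual pivot quicksort recurrence: if the average partitioning cost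
satisfies `P n = a·n + O(1)`, then the average sorting cost satisfies
`C n = (6/5)·a·n·ln n + O(n)`. -/
theorem dual_pivot_recurrence_bigO (a : ℝ) (P C : ℕ → ℝ)
    (hrec : ∀ n : ℕ, 2 ≤ n →
      C n = P n + 6 / ((n : ℝ) * ((n : ℝ) - 1)) *
        ∑ k ∈ Finset.range (n - 1), (((n : ℝ) - (k : ℝ) - 1) * C k))
    (hP : ∃ K : ℝ, ∀ n : ℕ, 2 ≤ n → |P n - a * (n : ℝ)| ≤ K) :
    ∃ K' : ℝ, ∀ n : ℕ, 2 ≤ n →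
      |C n - (6 / 5) * a * (n : ℝ) * Real.log n| ≤ K' * n := by
  obtain ⟨K, hK⟩ := hP
  set x : ℕ → ℝ := fun k => (k + 1) * harmonic k
  have hE (n : ℕ) (hn : 2 ≤ n) : |P n - a * n - 17 / 5 * a| ≤ K + 17 / 5 * |a| := by
    refine (abs_sub _ _).trans ?_
    rw [abs_mul, abs_of_pos (by norm_num : (0 : ℝ) < 17 / 5)]
    linarith [hK n hn]
  have hD (n : ℕ) (hn : 2 ≤ n) : C n - 6 / 5 * a * x n
      = (P n - a * n - 17 / 5 * a) + dualPivotAverage (fun k => C k - 6 / 5 * a * x k) n := by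
    rw [dualPivotAverage_sub, dualPivotAverage_const_mul, dualPivotAverage_succ_mul_harmonic hn]
    have hC : C n = P n + dualPivotAverage C n := hrec n hn
    simp only [x]
    linarith
  obtain ⟨K', hK'⟩ := exists_abs_le_mul_succ_of_eq_add_dualPivotAverage hE hD
  have hK'0 : 0 ≤ K' := by simpa using (abs_nonneg _).trans (hK' 0)
  refine ⟨2 * K' + 12 / 5 * |a|, fun n hn => ?_⟩
  have hn' : (1 : ℝ) ≤ n := by exact_mod_cast (by omega : 1 ≤ n)
  calc |C n - 6 / 5 * a * n * Real.log n|
      = |(C n - 6 / 5 * a * x n) + 6 / 5 * a * (x n - n * Real.log n)| := by congr 1; ring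
    _ ≤ |C n - 6 / 5 * a * x n| + 6 / 5 * |a| * |x n - n * Real.log n| := by
        refine (abs_add_le _ _).trans_eq ?_
        rw [abs_mul, abs_mul, abs_of_pos (by norm_num : (0 : ℝ) < 6 / 5)]
    _ ≤ K' * (n + 1) + 6 / 5 * |a| * (2 * n) := by
        gcongr
        exacts [hK' n, abs_succ_mul_harmonic_sub_mul_log_le n]
    _ ≤ (2 * K' + 12 / 5 * |a|) * n := by nlinarith [abs_nonneg a]
end

section
/- Let a ∈ ℝ and let (P_n) and (C_n) be sequences of real numbers satisfying C_n = P_n + (6/(n(n-1))) · Σ_{k=0}^{n-2} (n-k-1)·C_k for all n ≥ 2 (with C_0, C_1 arbitrary fixed reals). If P_n = a·n + o(n), i.e. (P_n − a·n)/n → 0 as n → ∞, then C_n = (6/5)·a·n·ln n + o(n·ln n), i.e. (C_n − (6/5)·a·n·ln n)/(n·ln n) → 0 as n → ∞. -/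
/-!
Put `Z n = (C n - P n) / (n + 1)`. Taking second differences of `n (n - 1) (C n - P n)`, which is
six times the double partial sum of `C`, gives a second-order recurrence for `C - P`; in terms of
`Z` it has the summation factor `(n - 2)(n - 1) n` and telescopes to the exact identity
`(n - 3)(n - 2)(n - 1) n (n + 1)(n + 2) (Z (n + 1) - Z n) = 6 ∑_{m < n} m (m - 1)(m - 2) P m`.
Stolz–Cesàro applied to the right-hand side gives `(n + 1)(Z (n + 1) - Z n) → 6a/5`, applied once
more against the harmonic numbers `Z n / H n → 6a/5`, and `H n ~ log n` finishes.
-/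

open Filter Finset Asymptotics Topology

section DoublePartialSum

variable {R : Type*} [CommRing R]

def doublePartialSum (f : ℕ → R) (n : ℕ) : R :=
  ∑ k ∈ range (n - 1), ((n : R) - k - 1) * f k

theorem doublePartialSum_succ_sub (f : ℕ → R) (n : ℕ) :
    doublePartialSum f (n + 1) - doublePartialSum f n = ∑ k ∈ range n, f k := by
  rcases n with _ | n
  · simp [doublePartialSum]
  · simp only [doublePartialSum, Nat.add_sub_cancel, sum_range_succ _ n]
    push_cast
    rw [add_sub_right_comm, ← sum_sub_distrib]
    congr 1
    · exact sum_congr rfl fun k _ => by ring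
    · ring

theorem doublePartialSum_second_difference (f : ℕ → R) (n : ℕ) :
    doublePartialSum f (n + 2) - 2 * doublePartialSum f (n + 1) + doublePartialSum f n = f n := by
  have h₁ := doublePartialSum_succ_sub f (n + 1)
  have h₀ := doublePartialSum_succ_sub f n
  rw [sum_range_succ] at h₁
  linear_combination h₁ - h₀

end DoublePartialSum

theorem tendsto_div_of_tendsto_sub_div_sub {A B : ℕ → ℝ} {L : ℝ} (hB : Monotone B)
    (hB_ne : ∀ᶠ n in atTop, B n ≠ B (n + 1)) (hB_top : Tendsto B atTop atTop)
    (hAB : Tendsto (fun n => (A (n + 1) - A n) / (B (n + 1) - B n)) atTop (𝓝 L)) :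
    Tendsto (fun n => A n / B n) atTop (𝓝 L) := by
  set w : ℕ → ℝ := fun n => B (n + 1) - B n
  have hw : 0 ≤ w := fun n => sub_nonneg.mpr (hB n.le_succ)
  have hsmall : (fun n => A (n + 1) - A n - L * w n) =o[atTop] w := by
    refine (isLittleO_iff_tendsto' ?_).mpr ?_
    · filter_upwards [hB_ne] with n hn hw0
      exact absurd (sub_eq_zero.mp hw0).symm hn
    · refine (tendsto_sub_nhds_zero_iff.mpr hAB).congr' ?_
      filter_upwards [hB_ne] with n hn
      have : w n ≠ 0 := sub_ne_zero.mpr hn.symm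
      field_simp
      ring
  have hsum_w (n : ℕ) : ∑ i ∈ range n, w i = B n - B 0 := sum_range_sub B n
  have hW : Tendsto (fun n => ∑ i ∈ range n, w i) atTop atTop := by
    simpa only [hsum_w, sub_eq_add_neg] using tendsto_atTop_add_const_right _ (-B 0) hB_top
  have hconst (c : ℝ) : (fun _ : ℕ => c) =o[atTop] B :=
    isLittleO_const_left.mpr (Or.inr (tendsto_norm_atTop_atTop.comp hB_top))
  have hmain : (fun n => A n - A 0 - L * (B n - B 0)) =o[atTop] B := by
    have h := hsmall.sum_range hw hW
    simp only [sum_sub_distrib, ← mul_sum, hsum_w, sum_range_sub A] at h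
    exact h.trans_isBigO ((isBigO_refl B atTop).sub (hconst (B 0)).isBigO)
  rw [← tendsto_sub_nhds_zero_iff]
  refine (hmain.add (hconst (A 0 - L * B 0))).tendsto_div_nhds_zero.congr' ?_
  filter_upwards [hB_top.eventually_gt_atTop 0] with n hn
  field_simp
  ring

theorem tendsto_div_natCast_of_tendsto_sub_mul_div {P : ℕ → ℝ} {a : ℝ}
    (hP : Tendsto (fun n : ℕ => (P n - a * n) / n) atTop (𝓝 0)) :
    Tendsto (fun n : ℕ => P n / n) atTop (𝓝 a) := by
  rw [← add_zero a]
  refine (hP.const_add a).congr' ?_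
  filter_upwards [eventually_ne_atTop 0] with n hn
  have : (n : ℝ) ≠ 0 := by exact_mod_cast hn
  field_simp
  ring

theorem falling_three_nonneg (n : ℕ) : 0 ≤ (n : ℝ) * (n - 1) * (n - 2) := by
  rcases n with _ | _ | n
  · simp
  · simp
  · push_cast
    nlinarith [(by positivity : (0 : ℝ) ≤ (n + 2) * (n + 1) * n)]

theorem tendsto_sum_falling_three_mul_div {P : ℕ → ℝ} {a : ℝ}
    (hP : Tendsto (fun n => P n / n) atTop (𝓝 a)) :
    Tendsto (fun n => (∑ m ∈ range n, (m : ℝ) * (m - 1) * (m - 2) * P m)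
      / (((n : ℝ) - 3) * (n - 2) * (n - 1) * n * (n + 2) / 6)) atTop (𝓝 (6 / 5 * a)) := by
  set B : ℕ → ℝ := fun n => ((n : ℝ) - 3) * (n - 2) * (n - 1) * n * (n + 2) / 6
  have hΔB (n : ℕ) : B (n + 1) - B n = (n : ℝ) * (n - 1) * (n - 2) * (5 * n + 9) / 6 := by
    simp only [B]; push_cast; ring
  refine tendsto_div_of_tendsto_sub_div_sub (B := B) (monotone_nat_of_le_succ fun n => ?_) ?_ ?_ ?_
  · rw [← sub_nonneg, hΔB]
    have := falling_three_nonneg n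
    positivity
  · filter_upwards [eventually_ge_atTop 3] with n hn
    rw [ne_comm, ← sub_ne_zero, hΔB]
    have : (3 : ℝ) ≤ n := by exact_mod_cast hn
    have : (0 : ℝ) < n * (n - 1) * (n - 2) * (5 * n + 9) := by
      apply mul_pos (mul_pos (mul_pos _ _) _) _ <;> linarith
    positivity
  · have hlin (c : ℝ) : Tendsto (fun n : ℕ => (n : ℝ) + c) atTop atTop :=
      tendsto_atTop_add_const_right _ c tendsto_natCast_atTop_atTop
    refine (((((hlin (-3)).atTop_mul_atTop₀ (hlin (-2))).atTop_mul_atTop₀ (hlin (-1))).atTop_mul_atTop₀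
      tendsto_natCast_atTop_atTop |>.atTop_mul_atTop₀ (hlin 2)).atTop_div_const
        (by norm_num : (0 : ℝ) < 6)).congr fun n => ?_
    simp only [B]
    ring
  · have hfrac : Tendsto (fun n : ℕ => 6 / 5 * ((n : ℝ) / (n + 9 / 5))) atTop (𝓝 (6 / 5)) := by
      simpa using (tendsto_natCast_div_add_atTop (9 / 5 : ℝ)).const_mul (6 / 5)
    refine (hfrac.mul hP).congr' ?_
    filter_upwards [eventually_ge_atTop 3] with n hn
    have : (3 : ℝ) ≤ n := by exact_mod_cast hn
    have : (n : ℝ) ≠ 0 := by linarith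
    have : (n : ℝ) - 1 ≠ 0 := by linarith
    have : (n : ℝ) - 2 ≠ 0 := by linarith
    have : (n : ℝ) + 9 / 5 ≠ 0 := by linarith
    rw [sum_range_succ, add_sub_cancel_left, hΔB]
    field_simp

theorem tendsto_log_natCast_atTop : Tendsto (fun n : ℕ => Real.log n) atTop atTop :=
  Real.tendsto_log_atTop.comp tendsto_natCast_atTop_atTop

theorem harmonic_monotone : Monotone fun n => (harmonic n : ℝ) :=
  monotone_nat_of_le_succ fun n => by
    push_cast [harmonic_succ]
    exact le_add_of_nonneg_right (by positivity)

theorem tendsto_harmonic_atTop : Tendsto (fun n => (harmonic n : ℝ)) atTop atTop :=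
  (Real.tendsto_harmonic_sub_log.add_atTop tendsto_log_natCast_atTop).congr fun n => by simp

theorem tendsto_harmonic_div_log :
    Tendsto (fun n => (harmonic n : ℝ) / Real.log n) atTop (𝓝 1) := by
  have h := (Real.tendsto_harmonic_sub_log.div_atTop tendsto_log_natCast_atTop).const_add 1
  rw [add_zero] at h
  refine h.congr' ?_
  filter_upwards [tendsto_log_natCast_atTop.eventually_gt_atTop 0] with n hn
  field_simp
  ring

def IsDualPivotRecurrence {K : Type*} [Field K] (P C : ℕ → K) : Prop :=
  ∀ n : ℕ, 2 ≤ n → C n = P n + 6 / ((n : K) * ((n : K) - 1)) * doublePartialSum C n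

namespace IsDualPivotRecurrence

section Field

variable {K : Type*} [Field K] [CharZero K] {P C : ℕ → K}

theorem mul_sub_one_mul_sub (hrec : IsDualPivotRecurrence P C) (n : ℕ) :
    (n : K) * (n - 1) * (C n - P n) = 6 * doublePartialSum C n := by
  rcases lt_or_ge n 2 with hn | hn
  · interval_cases n <;> simp [doublePartialSum]
  · have hn0 : (n : K) ≠ 0 := by exact_mod_cast (by omega : n ≠ 0)
    have hn1 : (n : K) - 1 ≠ 0 := sub_ne_zero.mpr (by exact_mod_cast (by omega : n ≠ 1))
    rw [hrec n hn]
    field_simp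
    ring

theorem second_difference (hrec : IsDualPivotRecurrence P C) (n : ℕ) :
    ((n : K) + 2) * (n + 1) * (C (n + 2) - P (n + 2)) - 2 * ((n + 1) * n * (C (n + 1) - P (n + 1)))
      + n * (n - 1) * (C n - P n) = 6 * C n := by
  have h₂ := hrec.mul_sub_one_mul_sub (n + 2)
  have h₁ := hrec.mul_sub_one_mul_sub (n + 1)
  have h₀ := hrec.mul_sub_one_mul_sub n
  push_cast at h₂ h₁
  linear_combination h₂ - 2 * h₁ + h₀ + 6 * doublePartialSum_second_difference C n

theorem increment_formula (hrec : IsDualPivotRecurrence P C) (n : ℕ) :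
    ((n : K) - 3) * (n - 2) * (n - 1) * n * (n + 2) * ((n + 1) *
        ((C (n + 1) - P (n + 1)) / (n + 2) - (C n - P n) / (n + 1)))
      = 6 * ∑ m ∈ range n, (m : K) * (m - 1) * (m - 2) * P m := by
  induction n with
  | zero => simp
  | succ n ih =>
    have h1 : (n : K) + 1 ≠ 0 := Nat.cast_add_one_ne_zero n
    have h2 : (n : K) + 2 ≠ 0 := by exact_mod_cast (Nat.succ_ne_zero (n + 1))
    have h2' : (n : K) + 1 + 1 ≠ 0 := by rwa [add_assoc, one_add_one_eq_two]
    have h3 : (n : K) + 1 + 2 ≠ 0 := by exact_mod_cast (Nat.succ_ne_zero (n + 2))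
    rw [sum_range_succ, mul_add (6 : K), ← ih]
    push_cast
    field_simp
    linear_combination (n : K) * (n - 1) * (n - 2) * hrec.second_difference n

end Field

variable {P C : ℕ → ℝ} {a : ℝ}

theorem tendsto_succ_mul_increment (hrec : IsDualPivotRecurrence P C)
    (hP : Tendsto (fun n => P n / n) atTop (𝓝 a)) :
    Tendsto (fun n : ℕ =>
        ((n : ℝ) + 1) * ((C (n + 1) - P (n + 1)) / (n + 2) - (C n - P n) / (n + 1)))
      atTop (𝓝 (6 / 5 * a)) := by
  refine (tendsto_sum_falling_three_mul_div hP).congr' ?_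
  filter_upwards [eventually_ge_atTop 4] with n hn
  have : (4 : ℝ) ≤ n := by exact_mod_cast hn
  have : ((n : ℝ) - 3) * (n - 2) * (n - 1) * n * (n + 2) ≠ 0 := by
    apply mul_ne_zero (mul_ne_zero (mul_ne_zero (mul_ne_zero _ _) _) _) _ <;> linarith
  rw [div_eq_iff (by positivity), ← mul_right_inj' (by norm_num : (6 : ℝ) ≠ 0),
    ← hrec.increment_formula n]
  ring

theorem tendsto_div_harmonic (hrec : IsDualPivotRecurrence P C)
    (hP : Tendsto (fun n => P n / n) atTop (𝓝 a)) :
    Tendsto (fun n : ℕ => (C n - P n) / (n + 1) / harmonic n) atTop (𝓝 (6 / 5 * a)) := by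
  refine tendsto_div_of_tendsto_sub_div_sub harmonic_monotone
    (Eventually.of_forall fun n => ?_) tendsto_harmonic_atTop
    ((hrec.tendsto_succ_mul_increment hP).congr fun n => ?_)
  · push_cast [harmonic_succ]
    exact (lt_add_of_pos_right _ (by positivity)).ne
  · push_cast [harmonic_succ]
    rw [add_sub_cancel_left, div_inv_eq_mul]
    ring

theorem tendsto_div_mul_log (hrec : IsDualPivotRecurrence P C)
    (hP : Tendsto (fun n => P n / n) atTop (𝓝 a)) :
    Tendsto (fun n : ℕ => C n / (n * Real.log n)) atTop (𝓝 (6 / 5 * a)) := by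
  have h := ((((tendsto_one_div_atTop_nhds_zero_nat (𝕜 := ℝ)).const_add 1).mul
    (hrec.tendsto_div_harmonic hP)).mul tendsto_harmonic_div_log).add
      (hP.div_atTop tendsto_log_natCast_atTop)
  rw [show ((1 : ℝ) + 0) * (6 / 5 * a) * 1 + 0 = 6 / 5 * a by ring] at h
  refine h.congr' ?_
  filter_upwards [eventually_ne_atTop 0] with n hn
  have : (n : ℝ) ≠ 0 := by exact_mod_cast hn
  have : (harmonic n : ℝ) ≠ 0 := by exact_mod_cast (harmonic_pos hn).ne'
  field_simp
  ring

end IsDualPivotRecurrence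

/-- Solving the dual pivot quicksort recurrence with sublinear error: if the average
partitioning cost satisfies `P n = a·n + o(n)`, then the average sorting cost satisfies
`C n = (6/5)·a·n·ln n + o(n·ln n)`. -/
theorem dual_pivot_recurrence_littleO (a : ℝ) (P C : ℕ → ℝ)
    (hrec : ∀ n : ℕ, 2 ≤ n →
      C n = P n + 6 / ((n : ℝ) * ((n : ℝ) - 1)) *
        ∑ k ∈ Finset.range (n - 1), (((n : ℝ) - (k : ℝ) - 1) * C k))
    (hP : Tendsto (fun n : ℕ => (P n - a * (n : ℝ)) / (n : ℝ)) atTop (nhds 0)) :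
    Tendsto (fun n : ℕ =>
        (C n - (6 / 5) * a * (n : ℝ) * Real.log n) / ((n : ℝ) * Real.log n))
      atTop (nhds 0) := by
  have hrec' : IsDualPivotRecurrence P C := hrec
  have hC := hrec'.tendsto_div_mul_log (tendsto_div_natCast_of_tendsto_sub_mul_div hP)
  rw [← sub_self (6 / 5 * a)]
  refine (hC.sub_const (6 / 5 * a)).congr' ?_
  filter_upwards [tendsto_log_natCast_atTop.eventually_gt_atTop 0, eventually_ne_atTop 0]
    with n hlog hn
  have : (n : ℝ) ≠ 0 := by exact_mod_cast hn
  field_simp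
end

section
/- Let c > 0 and let (A_n) be a sequence of nonnegative real numbers satisfying A_n ≤ c·ln n + (6/(n(n-1))) · Σ_{k=0}^{n-2} (n-k-1)·A_k for all n ≥ 2 (with A_0, A_1 arbitrary fixed nonnegative reals). Then A_n = O(n); more precisely, for D ≥ c/5 there exist constants C and n_0 such that A_n ≤ C·n − D·ln n for all n ≥ n_0. -/
/-!
Write the recurrence as `A n ≤ c log n + dualPivotAvg A n`. The weights `6 (n - k - 1) / (n (n - 1))`
of `dualPivotAvg` have total mass 3 and first moment `n - 2`, so a linear bound `K n` reproduces
itself with slack `2 K`; this absorbs any additive constant, but not the error `c log n`. Hence the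
induction hypothesis is strengthened to `A n ≤ |A 0| + K n - 10 c log n`. A fixed part of the weight
sits on `k ≥ n / 16`, where `log k ≥ log n - log 16`, so averaging `-10 c log k` gains
`11 c log n` up to a constant: enough to pay for `c log n` and to reproduce `-10 c log n`.
-/

open Finset Real

noncomputable def dualPivotAvg (f : ℕ → ℝ) (n : ℕ) : ℝ :=
  6 / ((n : ℝ) * ((n : ℝ) - 1)) * ∑ k ∈ range (n - 1), (((n : ℝ) - (k : ℝ) - 1) * f k)

lemma dualPivotAvg_mono {f g : ℕ → ℝ} {n : ℕ} (hfg : ∀ k < n - 1, f k ≤ g k) :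
    dualPivotAvg f n ≤ dualPivotAvg g n := by
  have hscale : 0 ≤ (n : ℝ) * ((n : ℝ) - 1) := by
    rcases n with _ | m
    · simp
    · push_cast
      rw [add_sub_cancel_right]
      positivity
  refine mul_le_mul_of_nonneg_left (sum_le_sum fun k hk => ?_) (div_nonneg (by norm_num) hscale)
  have hk' := mem_range.1 hk
  have : (k : ℝ) + 1 < n := by exact_mod_cast (by omega : k + 1 < n)
  exact mul_le_mul_of_nonneg_left (hfg k hk') (by linarith)

lemma sum_range_natCast (m : ℕ) : ∑ k ∈ range m, (k : ℝ) = m * (m - 1) / 2 := by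
  induction m with
  | zero => simp
  | succ m ih => rw [sum_range_succ, ih]; push_cast; ring

lemma sum_range_natCast_sq (m : ℕ) :
    ∑ k ∈ range m, (k : ℝ) ^ 2 = m * (m - 1) * (2 * m - 1) / 6 := by
  induction m with
  | zero => simp
  | succ m ih => rw [sum_range_succ, ih]; push_cast; ring

lemma dualPivotAvg_affine_sub_log {n : ℕ} (hn : 2 ≤ n) (a b d : ℝ) :
    dualPivotAvg (fun k => a + b * k - d * log k) n =
      3 * a + b * (n - 2) - d * dualPivotAvg (fun k => log k) n := by
  obtain ⟨m, rfl⟩ : ∃ m, n = m + 1 := ⟨n - 1, by omega⟩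
  have hm : (m : ℝ) ≠ 0 := by exact_mod_cast (by omega : m ≠ 0)
  have hsummand : ∀ k ∈ range m, ((m + 1 : ℕ) - (k : ℝ) - 1) * (a + b * k - d * log k) =
      a * m - a * k + b * m * k - b * (k : ℝ) ^ 2 - d * (((m + 1 : ℕ) - (k : ℝ) - 1) * log k) := by
    intro k _; push_cast; ring
  have hpoly : ∑ k ∈ range m, (a * m - a * k + b * m * k - b * (k : ℝ) ^ 2) =
      (m + 1) * m * (3 * a + b * (m - 1)) / 6 := by
    simp only [sum_sub_distrib, sum_add_distrib, ← mul_sum, sum_const, card_range, nsmul_eq_mul,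
      sum_range_natCast, sum_range_natCast_sq]
    ring
  unfold dualPivotAvg
  rw [Nat.add_sub_cancel, sum_congr rfl hsummand, sum_sub_distrib, ← mul_sum, hpoly]
  generalize ∑ k ∈ range m, ((m + 1 : ℕ) - (k : ℝ) - 1) * log k = L
  push_cast
  rw [add_sub_cancel_right]
  field_simp
  ring

lemma log_sub_log_le_dualPivotAvg_log {n : ℕ} (hn : 16 ≤ n) :
    11 / 10 * (log n - log 16) ≤ dualPivotAvg (fun k => log k) n := by
  have hnR : (16 : ℝ) ≤ n := by exact_mod_cast hn
  have hL : 0 ≤ log n - log 16 := sub_nonneg.2 (log_le_log (by norm_num) hnR)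
  have hweight : ∀ k ∈ range (n - 1), (k : ℝ) + 1 ≤ n - 1 := fun k hk => by
    have : k + 2 ≤ n := by have := mem_range.1 hk; omega
    have : ((k + 2 : ℕ) : ℝ) ≤ n := by exact_mod_cast this
    push_cast at this; linarith
  have hterm : ∀ k ∈ Ico (n / 16 + 1) (n / 2),
      (n : ℝ) / 2 * (log n - log 16) ≤ ((n : ℝ) - k - 1) * log k := fun k hk => by
    obtain ⟨hk₁, hk₂⟩ := mem_Ico.1 hk
    have hk : (n : ℝ) ≤ 16 * k := by exact_mod_cast (by omega : n ≤ 16 * k)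
    have hlogk : log n - log 16 ≤ log k := by
      rw [← log_div (by positivity) (by norm_num)]
      exact log_le_log (by positivity) (by linarith)
    have hw : (n : ℝ) ≤ 2 * ((n : ℝ) - k - 1) := by
      have := (Nat.cast_le (α := ℝ)).2 (by omega : 2 * (k + 1) ≤ n)
      push_cast at this; linarith
    exact mul_le_mul (by linarith) hlogk hL (by linarith)
  have hcount : (7 * (n : ℝ) - 24) / 16 ≤ ((n / 2 - (n / 16 + 1) : ℕ) : ℝ) := by
    have := (Nat.cast_le (α := ℝ)).2 (by omega : 7 * n ≤ 16 * (n / 2 - (n / 16 + 1)) + 24)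
    push_cast at this; linarith
  have hsum : ((n / 2 - (n / 16 + 1) : ℕ) : ℝ) * ((n : ℝ) / 2 * (log n - log 16)) ≤
      ∑ k ∈ range (n - 1), ((n : ℝ) - k - 1) * log k := by
    refine le_trans ?_ (sum_le_sum_of_subset_of_nonneg (s := Ico (n / 16 + 1) (n / 2)) ?_ ?_)
    · simpa [Nat.card_Ico, nsmul_eq_mul] using card_nsmul_le_sum _ _ _ hterm
    · intro k hk; simp only [mem_Ico, mem_range] at hk ⊢; omega
    · intro k hk _
      exact mul_nonneg (by linarith [hweight k hk]) (log_natCast_nonneg k)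
  have hd : 0 < (n : ℝ) * ((n : ℝ) - 1) := by nlinarith
  rw [dualPivotAvg, div_mul_eq_mul_div (6 : ℝ), le_div_iff₀ hd]
  have := mul_le_mul_of_nonneg_right hcount (by positivity : 0 ≤ (n : ℝ) / 2 * (log n - log 16))
  nlinarith [mul_nonneg (mul_nonneg (by linarith : (0 : ℝ) ≤ n) hL) (by linarith : (0 : ℝ) ≤ n - 16)]

theorem exists_le_mul_sub_log_of_le_log_add_dualPivotAvg {c : ℝ} (hc : 0 ≤ c) {A : ℕ → ℝ}
    (hrec : ∀ n, 2 ≤ n → A n ≤ c * log n + dualPivotAvg A n) :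
    ∃ K : ℝ, ∀ n, A n ≤ |A 0| + K * n - 10 * c * log n := by
  set a := |A 0|
  set K := (3 * a + 11 * c * log 16) / 2 + 10 * c * log 16 + ∑ j ∈ range 16, |A j| with hK
  have hlog16 : 0 ≤ log 16 := log_nonneg (by norm_num)
  have ha : 0 ≤ a := abs_nonneg _
  have hclog16 : 0 ≤ c * log 16 := mul_nonneg hc hlog16
  have hsmall : 0 ≤ ∑ j ∈ range 16, |A j| := sum_nonneg fun j _ => abs_nonneg _
  refine ⟨K, fun n => ?_⟩
  induction n using Nat.strong_induction_on with
  | _ n ih =>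
  rcases lt_or_ge n 16 with hn | hn
  · rcases Nat.eq_zero_or_pos n with rfl | hpos
    · simp [a, le_abs_self]
    have hAn : A n ≤ ∑ j ∈ range 16, |A j| :=
      (le_abs_self _).trans (single_le_sum (fun j _ => abs_nonneg (A j)) (mem_range.2 hn))
    have hlogn : log n ≤ log 16 := log_le_log (by positivity) (by exact_mod_cast hn.le)
    have hKn : K ≤ K * n := le_mul_of_one_le_right (by positivity) (by exact_mod_cast hpos)
    linarith [mul_le_mul_of_nonneg_left hlogn (by positivity : 0 ≤ 10 * c)]
  · have havg := mul_le_mul_of_nonneg_left (log_sub_log_le_dualPivotAvg_log hn)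
      (by positivity : 0 ≤ 10 * c)
    calc A n ≤ c * log n + dualPivotAvg A n := hrec n (by omega)
      _ ≤ c * log n + dualPivotAvg (fun k => a + K * k - 10 * c * log k) n :=
          add_le_add_right (dualPivotAvg_mono fun k hk => ih k (by omega)) _
      _ = c * log n + (3 * a + K * (n - 2) - 10 * c * dualPivotAvg (fun k => log k) n) := by
          rw [dualPivotAvg_affine_sub_log (by omega)]
      _ ≤ a + K * n - 10 * c * log n := by linarith [mul_sub K n 2]

theorem dual_pivot_log_error_terms_general (c : ℝ) (hc : 0 < c) (A : ℕ → ℝ)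
    (hrec : ∀ n : ℕ, 2 ≤ n →
      A n ≤ c * Real.log n + 6 / ((n : ℝ) * ((n : ℝ) - 1)) *
        ∑ k ∈ Finset.range (n - 1), (((n : ℝ) - (k : ℝ) - 1) * A k)) :
    (∃ K : ℝ, ∀ n : ℕ, 1 ≤ n → A n ≤ K * n) ∧
    ∀ D : ℝ, c / 5 ≤ D → ∃ C : ℝ, ∃ n₀ : ℕ, ∀ n : ℕ, n₀ ≤ n →
      A n ≤ C * n - D * Real.log n := by
  obtain ⟨K, hK⟩ := exists_le_mul_sub_log_of_le_log_add_dualPivotAvg hc.le hrec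
  have hlinear : ∀ n : ℕ, 1 ≤ n → A n ≤ (|A 0| + K) * n := fun n hn => by
    have hn' : (1 : ℝ) ≤ n := by exact_mod_cast hn
    nlinarith [hK n, log_natCast_nonneg n, abs_nonneg (A 0)]
  refine ⟨⟨_, hlinear⟩, fun D hD => ⟨|A 0| + K + D, 1, fun n hn => ?_⟩⟩
  have hlog : log n ≤ n := (log_le_sub_one_of_pos (by exact_mod_cast hn)).trans (by linarith)
  nlinarith [hlinear n hn]

/-- Logarithmic per-partitioning error terms in the dual pivot quicksort recurrence
contribute only `O(n)` to the total average sorting cost: if the nonnegative sequence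
`A` satisfies `A n ≤ c·ln n + (6/(n(n-1)))·Σ_{k=0}^{n-2}(n-k-1)·A k` for all `n ≥ 2`,
then `A n = O(n)`; more precisely, for every `D ≥ c/5` there are constants `C` and `n₀`
with `A n ≤ C·n − D·ln n` for all `n ≥ n₀`. -/
theorem dual_pivot_log_error_terms (c : ℝ) (hc : 0 < c) (A : ℕ → ℝ)
    (hA : ∀ n : ℕ, 0 ≤ A n)
    (hrec : ∀ n : ℕ, 2 ≤ n →
      A n ≤ c * Real.log n + 6 / ((n : ℝ) * ((n : ℝ) - 1)) *
        ∑ k ∈ Finset.range (n - 1), (((n : ℝ) - (k : ℝ) - 1) * A k)) :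
    (∃ K : ℝ, ∀ n : ℕ, 1 ≤ n → A n ≤ K * n) ∧
    ∀ D : ℝ, c / 5 ≤ D → ∃ C : ℝ, ∃ n₀ : ℕ, ∀ n : ℕ, n₀ ≤ n →
      A n ≤ C * n - D * Real.log n :=
  dual_pivot_log_error_terms_general c hc A hrec
end

section
/- For all n ≥ 2, (1/C(n,2)) · Σ_{s ≥ 0, ℓ ≥ 0, s + ℓ ≤ n−2} min(s, ℓ) = n/6 + O(1); that is, there is a constant K such that |(1/C(n,2)) · Σ_{s+ℓ ≤ n−2} min(s,ℓ) − n/6| ≤ K for all n ≥ 2. Consequently, the average partitioning cost of the ideal strategy, E(P_n) = (4/3)·n + (1/C(n,2)) · Σ_{s+ℓ ≤ n−2} min(s,ℓ), equals (3/2)·n + O(1). -/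
open Finset

lemma cnt_aux (N c : ℕ) :
    ∑ s ∈ range N, (if c ≤ 2*s then (1:ℕ) else 0) = N - (c+1)/2 := by
  induction N with
  | zero => simp
  | succ N ih =>
    rw [Finset.sum_range_succ, ih]
    by_cases h : c ≤ 2*N
    · simp only [if_pos h]; omega
    · simp only [if_neg h]; omega

lemma diag_aux (k : ℕ) :
    4 * (∑ s ∈ range (k+1), min s (k - s)) + k % 2 = k * k := by
  induction k with
  | zero => simp
  | succ k ih =>
    have h1 : ∀ s ∈ range (k+1),
        min s (k+1-s) = min s (k-s) + (if k+1 ≤ 2*s then 1 else 0) := by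
      intro s hs
      simp only [mem_range] at hs
      split_ifs with h <;> omega
    rw [Finset.sum_range_succ, Finset.sum_congr rfl h1, Finset.sum_add_distrib,
      cnt_aux]
    have h2 : (k+1) - (k+1+1)/2 = (k+1)/2 := by omega
    rw [h2]
    rcases Nat.even_or_odd k with ⟨j, hj⟩ | ⟨j, hj⟩
    · subst hj
      have e1 : (j + j + 1)/2 = j := by omega
      have e2 : min (j+j+1) (j+j+1-(j+j+1)) = 0 := by omega
      have e3 : (j+j+1) % 2 = 1 := by omega
      have e4 : (j+j) % 2 = 0 := by omega
      rw [e1, e2, e3]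
      rw [e4] at ih
      zify at ih ⊢
      linear_combination ih
    · subst hj
      have e1 : (2*j+1 + 1)/2 = j+1 := by omega
      have e2 : min (2*j+1+1) (2*j+1+1-(2*j+1+1)) = 0 := by omega
      have e3 : (2*j+1+1) % 2 = 0 := by omega
      have e4 : (2*j+1) % 2 = 1 := by omega
      rw [e1, e2, e3]
      rw [e4] at ih
      zify at ih ⊢
      linear_combination ih

lemma Tform (m : ℕ) :
    24 * (∑ s ∈ range (m+1), ∑ l ∈ range (m+1-s), min s l) + 6*((m+1)/2)
      = m*(m+1)*(2*m+1) := by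
  induction m with
  | zero => simp
  | succ m ih =>
    have hrec : (∑ s ∈ range (m+1+1), ∑ l ∈ range (m+1+1-s), min s l)
        = (∑ s ∈ range (m+1), ∑ l ∈ range (m+1-s), min s l)
          + ∑ s ∈ range (m+1+1), min s (m+1-s) := by
      rw [Finset.sum_range_succ (fun s => ∑ l ∈ range (m+1+1-s), min s l) (m+1)]
      have h0 : m+1+1-(m+1) = 1 := by omega
      simp only [h0, Finset.sum_range_one, Nat.min_zero]
      have h1 : ∀ s ∈ range (m+1),
          (∑ l ∈ range (m+1+1-s), min s l)
            = (∑ l ∈ range (m+1-s), min s l) + min s (m+1-s) := by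
        intro s hs
        simp only [mem_range] at hs
        rw [show m+1+1-s = (m+1-s)+1 by omega, Finset.sum_range_succ]
      rw [Finset.sum_congr rfl h1, Finset.sum_add_distrib,
        Finset.sum_range_succ (fun s => min s (m+1-s)) (m+1)]
      have h2 : min (m+1) (m+1-(m+1)) = 0 := by omega
      rw [h2]
      omega
    rw [hrec]
    have hd := diag_aux (m+1)
    rcases Nat.even_or_odd m with ⟨j, hj⟩ | ⟨j, hj⟩
    · subst hj
      have e1 : (j+j+1) % 2 = 1 := by omega
      have e2 : (j+j+1+1)/2 = j+1 := by omega
      have e3 : (j+j+1)/2 = j := by omega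
      rw [e1] at hd
      rw [e2]
      rw [e3] at ih
      zify at ih hd ⊢
      linear_combination ih + 6 * hd
    · subst hj
      have e1 : (2*j+1+1) % 2 = 0 := by omega
      have e2 : (2*j+1+1+1)/2 = j+1 := by omega
      have e3 : (2*j+1+1)/2 = j+1 := by omega
      rw [e1] at hd
      rw [e2]
      rw [e3] at ih
      zify at ih hd ⊢
      linear_combination ih + 6 * hd

/-- The additional cost term of the ideal classification strategy:
`(1/C(n,2)) · Σ_{s+ℓ ≤ n−2} min(s,ℓ) = n/6 + O(1)`, and consequently the average
partitioning cost `(4/3)·n + (1/C(n,2)) · Σ_{s+ℓ ≤ n−2} min(s,ℓ)` equals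
`(3/2)·n + O(1)`. -/
theorem ideal_strategy_act :
    ∃ K : ℝ, ∀ n : ℕ, 2 ≤ n →
      |1 / (n.choose 2 : ℝ) *
          (∑ s ∈ Finset.range (n - 1), ∑ l ∈ Finset.range (n - 1 - s),
            ((min s l : ℕ) : ℝ)) - (n : ℝ) / 6| ≤ K ∧
      |(4 / 3) * (n : ℝ) + 1 / (n.choose 2 : ℝ) *
          (∑ s ∈ Finset.range (n - 1), ∑ l ∈ Finset.range (n - 1 - s),
            ((min s l : ℕ) : ℝ)) - (3 / 2) * (n : ℝ)| ≤ K := by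
  refine ⟨2, fun n hn => ?_⟩
  obtain ⟨m, rfl⟩ : ∃ m, n = m + 2 := ⟨n - 2, by omega⟩
  have h1 : m + 2 - 1 = m + 1 := by omega
  simp only [h1]
  -- cast the double sum
  have hsum : (∑ s ∈ Finset.range (m+1), ∑ l ∈ Finset.range (m+1-s),
      ((min s l : ℕ) : ℝ))
      = ((∑ s ∈ range (m+1), ∑ l ∈ range (m+1-s), min s l : ℕ) : ℝ) := by
    push_cast
    rfl
  rw [hsum]
  set T : ℕ := ∑ s ∈ range (m+1), ∑ l ∈ range (m+1-s), min s l with hTdef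
  have hx : (0:ℝ) ≤ (m:ℝ) := Nat.cast_nonneg m
  have hC : ((m+2).choose 2 : ℝ) = ((m:ℝ)+2)*((m:ℝ)+1)/2 := by
    have h2 : (m+2).choose 2 = (m+2)*(m+1)/2 := by
      rw [Nat.choose_two_right]
      congr 1
    have hdvd : 2 ∣ (m+2)*(m+1) := by
      rw [mul_comm]
      exact (Nat.even_mul_succ_self (m+1)).two_dvd
    rw [h2, Nat.cast_div hdvd (by norm_num)]
    push_cast
    ring
  have hT := Tform m
  set r : ℕ := (m+1)/2 with hrdef
  have hr1 : 3*m ≤ 6*r := by omega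
  have hr2 : 6*r ≤ 3*m+3 := by omega
  have hTr : 24*(T:ℝ) + 6*(r:ℝ) = (m:ℝ)*((m:ℝ)+1)*(2*(m:ℝ)+1) := by
    exact_mod_cast hT
  have hr1' : 3*(m:ℝ) ≤ 6*(r:ℝ) := by exact_mod_cast hr1
  have hr2' : 6*(r:ℝ) ≤ 3*(m:ℝ)+3 := by exact_mod_cast hr2
  have key : 1 / ((m+2).choose 2 : ℝ) * (T:ℝ) - ((m+2:ℕ) : ℝ) / 6
      = (24*(T:ℝ) - 2*((m:ℝ)+1)*((m:ℝ)+2)^2) / (12*((m:ℝ)+1)*((m:ℝ)+2)) := by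
    rw [hC]
    push_cast
    have h1 : (m:ℝ) + 1 > 0 := by linarith
    have h2 : (m:ℝ) + 2 > 0 := by linarith
    field_simp
    ring
  have habs : |1 / ((m+2).choose 2 : ℝ) * (T:ℝ) - ((m+2:ℕ) : ℝ) / 6| ≤ 2 := by
    rw [key, abs_div, abs_of_pos (by positivity : (0:ℝ) < 12*((m:ℝ)+1)*((m:ℝ)+2)),
      div_le_iff₀ (by positivity : (0:ℝ) < 12*((m:ℝ)+1)*((m:ℝ)+2)), abs_le]
    constructor <;> nlinarith [mul_nonneg hx hx, hx]
  refine ⟨by exact_mod_cast habs, ?_⟩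
  have heq : (4/3) * ((m+2:ℕ) : ℝ) + 1 / ((m+2).choose 2 : ℝ) * (T:ℝ)
      - (3/2) * ((m+2:ℕ) : ℝ)
      = 1 / ((m+2).choose 2 : ℝ) * (T:ℝ) - ((m+2:ℕ) : ℝ) / 6 := by
    ring
  rw [heq]
  exact habs
end

section
/- For every n ≥ 3 and every real number f with 0 ≤ f ≤ n−2, the quantity (1/(C(n,2)·(n−2))) · Σ_{s ≥ 0, ℓ ≥ 0, s + ℓ ≤ n−2} (f·s + (n−2−f)·ℓ) is independent of f and equals exactly (n−2)/3. In particular, every oblivious classification strategy (one whose choice of first comparison pivot does not depend on s and ℓ) has additional cost term exactly (n−2)/3, giving average partitioning cost (5/3)·n + O(1). -/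
lemma gaussR (k : ℕ) : ∑ i ∈ Finset.range k, (i : ℝ) = (k : ℝ) * ((k : ℝ) - 1) / 2 := by
  induction k with
  | zero => simp
  | succ k ih => rw [Finset.sum_range_succ, ih]; push_cast; ring

lemma sumA (k : ℕ) :
    ∑ s ∈ Finset.range k, (s : ℝ) * ((k : ℝ) - (s : ℝ)) =
      (k : ℝ) * ((k : ℝ) - 1) * ((k : ℝ) + 1) / 6 := by
  induction k with
  | zero => simp
  | succ k ih =>
    rw [Finset.sum_range_succ]
    have h : ∑ s ∈ Finset.range k, (s : ℝ) * ((((k : ℕ) + 1 : ℕ) : ℝ) - (s : ℝ)) =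
        (∑ s ∈ Finset.range k, (s : ℝ) * ((k : ℝ) - (s : ℝ))) + ∑ s ∈ Finset.range k, (s : ℝ) := by
      rw [← Finset.sum_add_distrib]
      apply Finset.sum_congr rfl
      intro s _
      push_cast
      ring
    rw [h, ih, gaussR]
    push_cast
    ring

lemma sumB (k : ℕ) :
    ∑ s ∈ Finset.range k, ((k : ℝ) - s) * (((k : ℝ) - s) - 1) / 2 =
      (k : ℝ) * ((k : ℝ) - 1) * ((k : ℝ) + 1) / 6 := by
  induction k with
  | zero => simp
  | succ k ih =>
    rw [Finset.sum_range_succ']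
    have h : ∑ s ∈ Finset.range k,
        ((((k : ℕ) + 1 : ℕ) : ℝ) - (s + 1 : ℕ)) * (((((k : ℕ) + 1 : ℕ) : ℝ) - (s + 1 : ℕ)) - 1) / 2 =
        ∑ s ∈ Finset.range k, ((k : ℝ) - s) * (((k : ℝ) - s) - 1) / 2 := by
      apply Finset.sum_congr rfl
      intro s _
      push_cast
      ring
    rw [h, ih]
    push_cast
    ring

/-- Oblivious strategies: for every `n ≥ 3` and every `f ∈ [0, n−2]`, the additional
cost term `(1/(C(n,2)·(n−2))) · Σ_{s+ℓ ≤ n−2} (f·s + (n−2−f)·ℓ)` is independent of `f`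
and equals exactly `(n−2)/3`; in particular the average partitioning cost
`(4/3)·n + (n−2)/3` is `(5/3)·n + O(1)`. -/
theorem oblivious_strategy_act :
    (∀ n : ℕ, 3 ≤ n → ∀ f : ℝ, 0 ≤ f → f ≤ (n : ℝ) - 2 →
      1 / ((n.choose 2 : ℝ) * ((n : ℝ) - 2)) *
        (∑ s ∈ Finset.range (n - 1), ∑ l ∈ Finset.range (n - 1 - s),
          (f * (s : ℝ) + ((n : ℝ) - 2 - f) * (l : ℝ))) = ((n : ℝ) - 2) / 3) ∧
    ∃ K : ℝ, ∀ n : ℕ, 3 ≤ n →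
      |(4 / 3) * (n : ℝ) + ((n : ℝ) - 2) / 3 - (5 / 3) * (n : ℝ)| ≤ K := by
  constructor
  · intro n hn f _ _
    set k := n - 1 with hk
    have hkn : (k : ℝ) = (n : ℝ) - 1 := by
      rw [hk]; push_cast [Nat.cast_sub (by omega : 1 ≤ n)]; ring
    set c := (n : ℝ) - 2 - f with hc
    have hsum : ∑ s ∈ Finset.range k, ∑ l ∈ Finset.range (k - s),
        (f * (s : ℝ) + c * (l : ℝ)) =
        f * ((k : ℝ) * ((k : ℝ) - 1) * ((k : ℝ) + 1) / 6) +
        c * ((k : ℝ) * ((k : ℝ) - 1) * ((k : ℝ) + 1) / 6) := by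
      have step : ∀ s ∈ Finset.range k,
          ∑ l ∈ Finset.range (k - s), (f * (s : ℝ) + c * (l : ℝ)) =
          f * ((s : ℝ) * ((k : ℝ) - s)) + c * (((k : ℝ) - s) * (((k : ℝ) - s) - 1) / 2) := by
        intro s hs
        have hsk : s ≤ k := le_of_lt (Finset.mem_range.mp hs)
        have hcast : ((k - s : ℕ) : ℝ) = (k : ℝ) - s := by
          push_cast [Nat.cast_sub hsk]; ring
        simp only [Finset.sum_add_distrib, Finset.sum_const, Finset.card_range,
          nsmul_eq_mul, ← Finset.mul_sum]
        rw [gaussR, hcast]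
        ring
      rw [Finset.sum_congr rfl step, Finset.sum_add_distrib, ← Finset.mul_sum,
        ← Finset.mul_sum, sumA, sumB]
    have heq : n - 1 - 0 = k := by omega
    simp only [hk] at hsum ⊢
    rw [hsum]
    have hch : (n.choose 2 : ℝ) = (n : ℝ) * ((n : ℝ) - 1) / 2 := by
      rw [Nat.choose_two_right]
      rw [Nat.cast_div (by exact Nat.even_mul_pred_self n |>.two_dvd) (by norm_num)]
      push_cast [Nat.cast_sub (by omega : 1 ≤ n)]
      ring
    rw [hch, hkn]
    have h1 : (n : ℝ) ≥ 3 := by exact_mod_cast hn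
    have h2 : (n : ℝ) - 2 ≠ 0 := by nlinarith
    have h3 : (n : ℝ) - 1 ≠ 0 := by nlinarith
    have h4 : (n : ℝ) ≠ 0 := by nlinarith
    field_simp
    ring
  · exact ⟨2/3, fun n _ => by rw [show (4/3) * (n:ℝ) + ((n:ℝ)-2)/3 - (5/3)*(n:ℝ) = -(2/3) by ring]; rw [abs_neg, abs_of_nonneg (by norm_num)]⟩
end

section
/- For n ≥ 3, with m := n − 2 − s − ℓ, one has (1/(C(n,2)·(n−2))) · Σ_{s ≥ 0, ℓ ≥ 0, s + ℓ ≤ n−2} (ℓ·s + (s+m)·ℓ) = n/4 + O(1). Consequently, Yaroslavskiy's classification strategy, which compares ℓ elements with the larger pivot first and the remaining s+m elements with the smaller pivot first, has average partitioning cost (4/3)·n + n/4 + o(n) = (19/12)·n + o(n), and the resulting dual pivot quicksort makes 1.9·n·ln n + o(n·ln n) key comparisons on average. -/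
open Finset

lemma sum_id_real (M : ℕ) : ∑ l ∈ range M, (l : ℝ) = M * (M - 1) / 2 := by
  induction M with
  | zero => simp
  | succ m ih => rw [sum_range_succ, ih]; push_cast; ring

lemma sum_sq_real (M : ℕ) :
    ∑ l ∈ range M, (l : ℝ) ^ 2 = M * (M - 1) * (2 * M - 1) / 6 := by
  induction M with
  | zero => simp
  | succ m ih => rw [sum_range_succ, ih]; push_cast; ring

noncomputable def yphi (a s : ℝ) : ℝ :=
  (s + (a - 2)) * ((a - 1 - s) * (a - 2 - s) / 2) -
    (a - 1 - s) * (a - 2 - s) * (2 * a - 3 - 2 * s) / 6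

lemma youter_sum (a : ℝ) (m : ℕ) :
    ∑ s ∈ range m, yphi a (s : ℝ) =
      (-3/4) * m + (-17/24) * m^2 + (1/4) * m^3 + (5/24) * m^4 + (25/12) * a * m
      + (1/4) * a * m^2 + (-1/2) * a * m^3 + (-5/4) * a^2 * m + (1/4) * a^2 * m^2
      + (1/6) * a^3 * m := by
  induction m with
  | zero => simp
  | succ k ih => rw [sum_range_succ, ih]; unfold yphi; push_cast; ring

/-- The additional cost term of Yaroslavskiy's strategy (`f^q = ℓ`, `f^p = s + m` with
`m = n−2−s−ℓ`): `(1/(C(n,2)·(n−2))) · Σ_{s+ℓ ≤ n−2} (ℓ·s + (s+m)·ℓ) = n/4 + O(1)`. -/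
theorem yaroslavskiy_act :
    ∃ K : ℝ, ∀ n : ℕ, 3 ≤ n →
      |1 / ((n.choose 2 : ℝ) * ((n : ℝ) - 2)) *
          (∑ s ∈ Finset.range (n - 1), ∑ l ∈ Finset.range (n - 1 - s),
            ((l : ℝ) * (s : ℝ) +
              ((s : ℝ) + ((n : ℝ) - 2 - (s : ℝ) - (l : ℝ))) * (l : ℝ))) -
        (n : ℝ) / 4| ≤ K := by
  refine ⟨3/4, fun n hn => ?_⟩
  have hinner : ∀ s ∈ range (n - 1),
      (∑ l ∈ Finset.range (n - 1 - s),
        ((l : ℝ) * (s : ℝ) +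
          ((s : ℝ) + ((n : ℝ) - 2 - (s : ℝ) - (l : ℝ))) * (l : ℝ)))
        = yphi (n : ℝ) (s : ℝ) := by
    intro s hs
    have hs' : s ≤ n - 1 := le_of_lt (mem_range.mp hs)
    have hcast : ((n - 1 - s : ℕ) : ℝ) = (n : ℝ) - 1 - (s : ℝ) := by
      rw [Nat.cast_sub hs', Nat.cast_sub (show 1 ≤ n by omega)]
      push_cast; ring
    calc (∑ l ∈ Finset.range (n - 1 - s),
            ((l : ℝ) * (s : ℝ) +
              ((s : ℝ) + ((n : ℝ) - 2 - (s : ℝ) - (l : ℝ))) * (l : ℝ)))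
        = ∑ l ∈ Finset.range (n - 1 - s),
            (((s : ℝ) + ((n : ℝ) - 2)) * (l : ℝ) - (l : ℝ) ^ 2) := by
          refine sum_congr rfl fun l _ => ?_; ring
      _ = ((s : ℝ) + ((n : ℝ) - 2)) * (∑ l ∈ Finset.range (n - 1 - s), (l : ℝ))
            - ∑ l ∈ Finset.range (n - 1 - s), (l : ℝ) ^ 2 := by
          rw [sum_sub_distrib, mul_sum]
      _ = yphi (n : ℝ) (s : ℝ) := by
          rw [sum_id_real, sum_sq_real, hcast]; unfold yphi; ring
  rw [sum_congr rfl hinner, youter_sum]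
  have hm : ((n - 1 : ℕ) : ℝ) = (n : ℝ) - 1 := by
    rw [Nat.cast_sub (show 1 ≤ n by omega)]; push_cast; ring
  rw [hm, Nat.cast_choose_two]
  have hn3 : (3 : ℝ) ≤ (n : ℝ) := by exact_mod_cast hn
  have h1 : (n : ℝ) ≠ 0 := by positivity
  have h2 : (n : ℝ) - 1 ≠ 0 := by nlinarith
  have h3 : (n : ℝ) - 2 ≠ 0 := by nlinarith
  have key : 1 / ((n : ℝ) * ((n : ℝ) - 1) / 2 * ((n : ℝ) - 2)) *
      ((-3/4) * ((n:ℝ)-1) + (-17/24) * ((n:ℝ)-1)^2 + (1/4) * ((n:ℝ)-1)^3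
        + (5/24) * ((n:ℝ)-1)^4 + (25/12) * (n:ℝ) * ((n:ℝ)-1)
        + (1/4) * (n:ℝ) * ((n:ℝ)-1)^2 + (-1/2) * (n:ℝ) * ((n:ℝ)-1)^3
        + (-5/4) * (n:ℝ)^2 * ((n:ℝ)-1) + (1/4) * (n:ℝ)^2 * ((n:ℝ)-1)^2
        + (1/6) * (n:ℝ)^3 * ((n:ℝ)-1)) - (n : ℝ) / 4 = -(3/4) := by
    field_simp
    ring
  rw [key, abs_neg, abs_of_nonneg (by norm_num)]
end

section
/- Let N ≥ 0 and let x₁, …, x_N be a sequence over the alphabet {small, large} containing exactly s small and ℓ large symbols, with s ≥ ℓ. For 1 ≤ i ≤ N let s_i denote the number of small symbols among x_i, …, x_N and ℓ_i the number of large symbols among x_i, …, x_N (both counts including position i). Call position i a mistake if either s_i = ℓ_i, or (s_i > ℓ_i and x_i is large), or (s_i < ℓ_i and x_i is small). Then the total number of mistakes equals exactly ℓ = min(s, ℓ). -/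
private lemma card_filter_succ' (N : ℕ) (p : Fin (N + 1) → Prop) [DecidablePred p] :
    (Finset.univ.filter p).card =
      (if p 0 then 1 else 0) + (Finset.univ.filter (fun j : Fin N => p j.succ)).card := by
  rw [Finset.card_filter, Fin.sum_univ_succ, ← Finset.card_filter]

private lemma suf_succ' (N : ℕ) (x : Fin (N + 1) → Bool) (b : Bool) (i : Fin N) :
    (Finset.univ.filter (fun j : Fin (N + 1) => i.succ ≤ j ∧ x j = b)).card =
      (Finset.univ.filter (fun j : Fin N => i ≤ j ∧ x j.succ = b)).card := by
  rw [card_filter_succ']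
  simp [Fin.le_zero_iff, Fin.succ_ne_zero, Fin.succ_le_succ_iff]

private lemma mistakes_aux : ∀ (N : ℕ) (x : Fin N → Bool),
    (Finset.univ.filter (fun i : Fin N =>
        (Finset.univ.filter (fun j => i ≤ j ∧ x j = true)).card =
          (Finset.univ.filter (fun j => i ≤ j ∧ x j = false)).card ∨
        ((Finset.univ.filter (fun j => i ≤ j ∧ x j = false)).card <
            (Finset.univ.filter (fun j => i ≤ j ∧ x j = true)).card ∧ x i = false) ∨
        ((Finset.univ.filter (fun j => i ≤ j ∧ x j = true)).card <
            (Finset.univ.filter (fun j => i ≤ j ∧ x j = false)).card ∧ x i = true))).card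
      = min (Finset.univ.filter (fun j => x j = true)).card
            (Finset.univ.filter (fun j => x j = false)).card := by
  intro N
  induction N with
  | zero => intro x; simp
  | succ N ih =>
    intro x
    set y : Fin N → Bool := fun j => x j.succ with hy
    rw [card_filter_succ']
    have htail : (Finset.univ.filter (fun j : Fin N =>
        ((Finset.univ.filter (fun k : Fin (N+1) => j.succ ≤ k ∧ x k = true)).card =
          (Finset.univ.filter (fun k : Fin (N+1) => j.succ ≤ k ∧ x k = false)).card ∨
        ((Finset.univ.filter (fun k : Fin (N+1) => j.succ ≤ k ∧ x k = false)).card <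
            (Finset.univ.filter (fun k : Fin (N+1) => j.succ ≤ k ∧ x k = true)).card ∧ x j.succ = false) ∨
        ((Finset.univ.filter (fun k : Fin (N+1) => j.succ ≤ k ∧ x k = true)).card <
            (Finset.univ.filter (fun k : Fin (N+1) => j.succ ≤ k ∧ x k = false)).card ∧ x j.succ = true)))) =
        (Finset.univ.filter (fun j : Fin N =>
        ((Finset.univ.filter (fun k : Fin N => j ≤ k ∧ y k = true)).card =
          (Finset.univ.filter (fun k : Fin N => j ≤ k ∧ y k = false)).card ∨
        ((Finset.univ.filter (fun k : Fin N => j ≤ k ∧ y k = false)).card <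
            (Finset.univ.filter (fun k : Fin N => j ≤ k ∧ y k = true)).card ∧ y j = false) ∨
        ((Finset.univ.filter (fun k : Fin N => j ≤ k ∧ y k = true)).card <
            (Finset.univ.filter (fun k : Fin N => j ≤ k ∧ y k = false)).card ∧ y j = true)))) := by
      apply Finset.filter_congr
      intro j _
      rw [suf_succ', suf_succ']
    rw [htail, ih y]
    have hct : ∀ b, (Finset.univ.filter (fun j : Fin (N+1) => x j = b)).card =
        (if x 0 = b then 1 else 0) + (Finset.univ.filter (fun j : Fin N => y j = b)).card := by
      intro b
      rw [card_filter_succ']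
    have hsz : ∀ b, (Finset.univ.filter (fun k : Fin (N+1) => (0 : Fin (N+1)) ≤ k ∧ x k = b)).card =
        (Finset.univ.filter (fun j : Fin (N+1) => x j = b)).card := by
      intro b; congr 1; apply Finset.filter_congr; intro k _; simp [Fin.zero_le]
    rw [hct true, hct false, hsz true, hsz false, hct true, hct false]
    cases h0 : x 0 <;> simp [h0] <;>
      set S := (Finset.univ.filter (fun j : Fin N => y j = true)).card <;>
      set L := (Finset.univ.filter (fun j : Fin N => y j = false)).card <;>
      split <;> omega

/-- The pairing argument for the optimal classification strategy: for a sequence of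
`N` symbols (`true` = small, `false` = large) with exactly `s` small and `ℓ` large
symbols, `s ≥ ℓ`, where `s_i` and `ℓ_i` count small resp. large symbols in the suffix
starting at position `i`, the number of positions `i` that are mistakes — i.e.
`s_i = ℓ_i`, or `s_i > ℓ_i` with `x_i` large, or `s_i < ℓ_i` with `x_i` small —
equals exactly `ℓ = min(s, ℓ)`. -/
theorem optimal_strategy_mistakes (N s l : ℕ) (x : Fin N → Bool)
    (hs : (Finset.univ.filter (fun j => x j = true)).card = s)
    (hl : (Finset.univ.filter (fun j => x j = false)).card = l)
    (hsl : l ≤ s) :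
    (Finset.univ.filter (fun i : Fin N =>
        (Finset.univ.filter (fun j => i ≤ j ∧ x j = true)).card =
          (Finset.univ.filter (fun j => i ≤ j ∧ x j = false)).card ∨
        ((Finset.univ.filter (fun j => i ≤ j ∧ x j = false)).card <
            (Finset.univ.filter (fun j => i ≤ j ∧ x j = true)).card ∧ x i = false) ∨
        ((Finset.univ.filter (fun j => i ≤ j ∧ x j = true)).card <
            (Finset.univ.filter (fun j => i ≤ j ∧ x j = false)).card ∧ x i = true))).card
      = l := by
  rw [mistakes_aux, hs, hl]
  exact min_eq_right hsl
end

section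
/- Let n ≥ 2 and consider the following random experiment: choose s uniformly at random from {0, 1, …, n}, then choose a uniformly random binary sequence (x₁, …, x_n) ∈ {0,1}ⁿ with exactly s ones. Let Z_n be the number of indices i ∈ {1, …, n} such that the suffix (x_i, …, x_n) contains exactly as many ones as zeros. Then E(Z_n) = Θ(log n); that is, there exist constants c₁, c₂ > 0 and n₀ such that c₁·log n ≤ E(Z_n) ≤ c₂·log n for all n ≥ n₀. -/
/-- The number of suffix zero-crossings of a binary sequence `S ⊆ Fin n` (positions of
ones): the number of indices `i` such that the suffix starting at `i` contains exactly
as many ones as zeros. -/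
def zeroCrossings (n : ℕ) (S : Finset (Fin n)) : ℕ :=
  (Finset.univ.filter (fun i : Fin n =>
    (Finset.univ.filter (fun j : Fin n => i ≤ j ∧ j ∈ S)).card =
      (Finset.univ.filter (fun j : Fin n => i ≤ j ∧ j ∉ S)).card)).card

/-- The expected number of zero-crossings `E(Z_n)` when first `s` is chosen uniformly
from `{0,…,n}` and then a uniformly random binary sequence with exactly `s` ones is
chosen. -/
noncomputable def expZeroCrossings (n : ℕ) : ℝ :=
  (∑ s ∈ Finset.range (n + 1),
      (∑ S ∈ (Finset.univ : Finset (Fin n)).powersetCard s,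
        ((zeroCrossings n S : ℕ) : ℝ)) / (n.choose s : ℝ)) / ((n : ℝ) + 1)


section Aux
open Finset

lemma sum_range_choose_aux (n k : ℕ) :
    ∑ s ∈ range (n + 1), s.choose k = (n + 1).choose (k + 1) := by
  rw [← Nat.sum_Icc_choose]
  symm
  apply Finset.sum_subset
  · intro x hx; simp only [mem_Icc, mem_range] at hx ⊢; omega
  · intro x hx hx'
    simp only [mem_Icc, mem_range] at hx hx'
    exact Nat.choose_eq_zero_of_lt (by omega)

lemma sum_choose_mul_choose (n : ℕ) : ∀ k j : ℕ,
    ∑ s ∈ range (n + 1), s.choose k * (n - s).choose j = (n + 1).choose (k + j + 1) := by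
  induction n with
  | zero =>
    intro k j
    simp only [Finset.sum_range_one, Nat.zero_sub]
    match k, j with
    | 0, 0 => simp
    | k+1, j => simp [Nat.choose_eq_zero_of_lt (by omega : (1:ℕ) < k + 1 + j + 1)]
    | 0, j+1 =>
      simp only [Nat.choose_zero_succ, Nat.mul_zero, Nat.zero_add]
      exact (Nat.choose_eq_zero_of_lt (by omega)).symm
  | succ n ih =>
    intro k j
    match j with
    | 0 => simpa using sum_range_choose_aux (n+1) k
    | j+1 =>
      rw [Finset.sum_range_succ]
      simp only [Nat.sub_self, Nat.choose_succ_self, Nat.mul_zero, Nat.add_zero]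
      have hcongr : ∑ s ∈ range (n + 1), s.choose k * (n + 1 - s).choose (j+1)
          = ∑ s ∈ range (n + 1), (s.choose k * (n - s).choose j
              + s.choose k * (n - s).choose (j+1)) := by
        apply Finset.sum_congr rfl
        intro s hs
        rw [mem_range] at hs
        have h1 : n + 1 - s = (n - s) + 1 := by omega
        rw [h1, Nat.choose_succ_succ, Nat.mul_add]
      rw [hcongr, Finset.sum_add_distrib, ih k j, ih k (j+1)]
      have h2 : (0:ℕ).choose (j+1) = 0 := Nat.choose_zero_succ j
      rw [h2, Nat.mul_zero, Nat.add_zero]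
      have h3 : k + (j + 1) + 1 = (k + j + 1) + 1 := by omega
      rw [h3, Nat.choose_succ_succ' (n+1) (k+j+1)]

lemma count_inter_card {n : ℕ} (s k : ℕ) (T : Finset (Fin n)) (hk : k ≤ s) :
    (((univ : Finset (Fin n)).powersetCard s).filter
        (fun S => (T ∩ S).card = k)).card
      = T.card.choose k * (n - T.card).choose (s - k) := by
  have hprod : (T.powersetCard k ×ˢ (Tᶜ).powersetCard (s - k)).card
      = T.card.choose k * (n - T.card).choose (s - k) := by
    rw [Finset.card_product, Finset.card_powersetCard, Finset.card_powersetCard,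
      Finset.card_compl, Fintype.card_fin]
  rw [← hprod]
  apply Finset.card_bij' (fun S _ => (T ∩ S, S \ T)) (fun P _ => P.1 ∪ P.2)
  · intro S hS
    simp only [Finset.mem_filter, Finset.mem_powersetCard] at hS
    obtain ⟨⟨_, hcard⟩, hkeq⟩ := hS
    simp only [Finset.mem_product, Finset.mem_powersetCard]
    refine ⟨⟨Finset.inter_subset_left, hkeq⟩,
      fun x hx => Finset.mem_compl.mpr (Finset.mem_sdiff.mp hx).2, ?_⟩
    have := Finset.card_inter_add_card_sdiff S T
    rw [Finset.inter_comm] at this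
    omega
  · intro P hP
    simp only [Finset.mem_product, Finset.mem_powersetCard] at hP
    obtain ⟨⟨hA, hAc⟩, hB, hBc⟩ := hP
    have hdisj : Disjoint P.1 P.2 := by
      refine Finset.disjoint_left.mpr fun x hx1 hx2 => ?_
      exact (Finset.mem_compl.mp (hB hx2)) (hA hx1)
    simp only [Finset.mem_filter, Finset.mem_powersetCard]
    refine ⟨⟨Finset.subset_univ _, ?_⟩, ?_⟩
    · rw [Finset.card_union_of_disjoint hdisj, hAc, hBc]; omega
    · rw [Finset.inter_union_distrib_left]
      have h1 : T ∩ P.1 = P.1 := Finset.inter_eq_right.mpr hA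
      have h2 : T ∩ P.2 = ∅ := by
        refine Finset.eq_empty_of_forall_notMem fun x hx => ?_
        rw [Finset.mem_inter] at hx
        exact (Finset.mem_compl.mp (hB hx.2)) hx.1
      rw [h1, h2, Finset.union_empty, hAc]
  · intro S hS
    rw [Finset.inter_comm, Finset.union_comm, Finset.sdiff_union_inter]
  · intro P hP
    simp only [Finset.mem_product, Finset.mem_powersetCard] at hP
    obtain ⟨⟨hA, hAc⟩, hB, hBc⟩ := hP
    have h1 : T ∩ P.1 = P.1 := Finset.inter_eq_right.mpr hA
    have h2 : T ∩ P.2 = ∅ := by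
      refine Finset.eq_empty_of_forall_notMem fun x hx => ?_
      rw [Finset.mem_inter] at hx
      exact (Finset.mem_compl.mp (hB hx.2)) hx.1
    have h3 : P.1 \ T = ∅ := by
      refine Finset.eq_empty_of_forall_notMem fun x hx => ?_
      rw [Finset.mem_sdiff] at hx
      exact hx.2 (hA hx.1)
    have h4 : P.2 \ T = P.2 := by
      refine Finset.sdiff_eq_self_of_disjoint ?_
      refine Finset.disjoint_left.mpr fun x hx1 hx2 => ?_
      exact (Finset.mem_compl.mp (hB hx1)) hx2
    have e1 : T ∩ (P.1 ∪ P.2) = P.1 := by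
      rw [Finset.inter_union_distrib_left, h1, h2, Finset.union_empty]
    have e2 : (P.1 ∪ P.2) \ T = P.2 := by
      rw [Finset.union_sdiff_distrib, h3, h4, Finset.empty_union]
    rw [e1, e2]

lemma count_inter_card_zero {n : ℕ} (s k : ℕ) (T : Finset (Fin n)) (hk : s < k) :
    (((univ : Finset (Fin n)).powersetCard s).filter
        (fun S => (T ∩ S).card = k)).card = 0 := by
  rw [Finset.card_eq_zero]
  refine Finset.eq_empty_of_forall_notMem fun S hS => ?_
  simp only [Finset.mem_filter, Finset.mem_powersetCard] at hS
  obtain ⟨⟨_, hcard⟩, hkeq⟩ := hS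
  have := Finset.card_le_card (Finset.inter_subset_right (s₁ := T) (s₂ := S))
  omega

lemma choose_transform (a b c d : ℕ) :
    ((a+b).choose a * ((c+d).choose c * (a+b+c+d).choose (a+b)) : ℝ)
      = (a+c).choose a * ((b+d).choose b * (a+b+c+d).choose (a+c)) := by
  have h1 : (((a+b).choose a : ℕ) : ℝ) = Nat.factorial (a+b) / (Nat.factorial a * Nat.factorial b) := by
    rw [Nat.cast_choose ℝ (Nat.le_add_right a b), Nat.add_sub_cancel_left]
  have h2 : (((c+d).choose c : ℕ) : ℝ) = Nat.factorial (c+d) / (Nat.factorial c * Nat.factorial d) := by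
    rw [Nat.cast_choose ℝ (Nat.le_add_right c d), Nat.add_sub_cancel_left]
  have h3 : (((a+b+c+d).choose (a+b) : ℕ) : ℝ) = Nat.factorial (a+b+c+d) / (Nat.factorial (a+b) * Nat.factorial (c+d)) := by
    rw [Nat.cast_choose ℝ (by omega : a + b ≤ a+b+c+d),
      (by omega : a+b+c+d-(a+b) = c+d)]
  have h4 : (((a+c).choose a : ℕ) : ℝ) = Nat.factorial (a+c) / (Nat.factorial a * Nat.factorial c) := by
    rw [Nat.cast_choose ℝ (Nat.le_add_right a c), Nat.add_sub_cancel_left]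
  have h5 : (((b+d).choose b : ℕ) : ℝ) = Nat.factorial (b+d) / (Nat.factorial b * Nat.factorial d) := by
    rw [Nat.cast_choose ℝ (Nat.le_add_right b d), Nat.add_sub_cancel_left]
  have h6 : (((a+b+c+d).choose (a+c) : ℕ) : ℝ) = Nat.factorial (a+b+c+d) / (Nat.factorial (a+c) * Nat.factorial (b+d)) := by
    rw [Nat.cast_choose ℝ (by omega : a + c ≤ a+b+c+d),
      (by omega : a+b+c+d-(a+c) = b+d)]
  rw [h1, h2, h3, h4, h5, h6]
  have f1 : (Nat.factorial (a+b) : ℝ) ≠ 0 := Nat.cast_ne_zero.mpr (Nat.factorial_ne_zero _)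
  have f2 : (Nat.factorial (c+d) : ℝ) ≠ 0 := Nat.cast_ne_zero.mpr (Nat.factorial_ne_zero _)
  have f3 : (Nat.factorial (a+c) : ℝ) ≠ 0 := Nat.cast_ne_zero.mpr (Nat.factorial_ne_zero _)
  have f4 : (Nat.factorial (b+d) : ℝ) ≠ 0 := Nat.cast_ne_zero.mpr (Nat.factorial_ne_zero _)
  have f5 : (Nat.factorial (a) : ℝ) ≠ 0 := Nat.cast_ne_zero.mpr (Nat.factorial_ne_zero _)
  have f6 : (Nat.factorial (b) : ℝ) ≠ 0 := Nat.cast_ne_zero.mpr (Nat.factorial_ne_zero _)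
  have f7 : (Nat.factorial (c) : ℝ) ≠ 0 := Nat.cast_ne_zero.mpr (Nat.factorial_ne_zero _)
  have f8 : (Nat.factorial (d) : ℝ) ≠ 0 := Nat.cast_ne_zero.mpr (Nat.factorial_ne_zero _)
  field_simp

lemma choose_swap {n m k s : ℕ} (hm : m ≤ n) (hs : s ≤ n) (hk : k ≤ m) (hks : k ≤ s) :
    (m.choose k * ((n-m).choose (s-k) * n.choose m) : ℝ)
      = s.choose k * ((n-s).choose (m-k) * n.choose s) := by
  by_cases hcd : s - k ≤ n - m
  · obtain ⟨b, hb⟩ : ∃ b, m = k + b := ⟨m - k, by omega⟩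
    obtain ⟨c, hc⟩ : ∃ c, s = k + c := ⟨s - k, by omega⟩
    obtain ⟨d, hd⟩ : ∃ d, n = k + b + c + d := ⟨n - m - (s-k), by omega⟩
    have e1 : n - m = c + d := by omega
    have e2 : n - s = b + d := by omega
    have e3 : s - k = c := by omega
    have e4 : m - k = b := by omega
    rw [e1, e2, e3, e4, hb, hc, hd]
    exact choose_transform k b c d
  · have z1 : (n-m).choose (s-k) = 0 := Nat.choose_eq_zero_of_lt (by omega)
    have z2 : (n-s).choose (m-k) = 0 := Nat.choose_eq_zero_of_lt (by omega)
    rw [z1, z2]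
    push_cast
    ring

lemma key_sum {n k : ℕ} (T : Finset (Fin n)) (hT : T.card = 2*k) (hkn : 2*k ≤ n) :
    ∑ s ∈ range (n+1),
        ((((univ : Finset (Fin n)).powersetCard s).filter
            (fun S => (T ∩ S).card = k)).card : ℝ) / (n.choose s : ℝ)
      = (n+1)/(2*k+1) := by
  have hnm : (n.choose (2*k) : ℝ) ≠ 0 :=
    Nat.cast_ne_zero.mpr (Nat.choose_pos hkn).ne'
  have hstep : ∀ s ∈ range (n+1),
      ((((univ : Finset (Fin n)).powersetCard s).filter
          (fun S => (T ∩ S).card = k)).card : ℝ) / (n.choose s : ℝ)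
        = (s.choose k * (n-s).choose k : ℝ) / (n.choose (2*k) : ℝ) := by
    intro s hs
    rw [mem_range] at hs
    have hsn : s ≤ n := by omega
    have hns : (n.choose s : ℝ) ≠ 0 := Nat.cast_ne_zero.mpr (Nat.choose_pos hsn).ne'
    rcases lt_or_ge s k with hlt | hge
    · rw [count_inter_card_zero s k T hlt, Nat.choose_eq_zero_of_lt hlt]
      push_cast; ring
    · rw [count_inter_card s k T hge, hT]
      rw [div_eq_div_iff hns hnm]
      have := choose_swap (n := n) (m := 2*k) (s := s) hkn hsn (by omega) hge
      rw [(by omega : 2*k - k = k)] at this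
      push_cast at this ⊢
      linarith [this]
  rw [Finset.sum_congr rfl hstep, ← Finset.sum_div]
  have hsum : ∑ s ∈ range (n+1), (s.choose k * (n-s).choose k : ℝ)
      = ((n+1).choose (2*k+1) : ℝ) := by
    have h := sum_choose_mul_choose n k k
    rw [(by omega : k + k + 1 = 2*k+1)] at h
    exact_mod_cast h
  rw [hsum]
  have hid : (n+1) * n.choose (2*k) = (n+1).choose (2*k+1) * (2*k+1) :=
    Nat.add_one_mul_choose_eq n (2*k)
  rw [div_eq_div_iff hnm (by positivity : ((2:ℝ)*k+1) ≠ 0)]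
  have hid' : ((n:ℝ)+1) * n.choose (2*k) = (n+1).choose (2*k+1) * (2*(k:ℝ)+1) := by
    exact_mod_cast hid
  linarith [hid']

lemma exp_eq (n : ℕ) :
    expZeroCrossings n
      = ∑ j ∈ range n, (if Even (j+1) then 1/((j:ℝ)+2) else 0) := by
  have hn1 : ((n:ℝ)+1) ≠ 0 := by positivity
  -- balance condition rewrite
  have hbal : ∀ (i : Fin n) (S : Finset (Fin n)),
      ((univ.filter (fun j : Fin n => i ≤ j ∧ j ∈ S)).card =
        (univ.filter (fun j : Fin n => i ≤ j ∧ j ∉ S)).card)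
      ↔ (Even (Ici i).card ∧ (Ici i ∩ S).card = (Ici i).card / 2) := by
    intro i S
    have h1 : univ.filter (fun j : Fin n => i ≤ j ∧ j ∈ S) = Ici i ∩ S := by
      ext j; simp [Finset.mem_Ici]
    have h2 : univ.filter (fun j : Fin n => i ≤ j ∧ j ∉ S) = Ici i \ S := by
      ext j; simp [Finset.mem_Ici]
    rw [h1, h2]
    have h3 := Finset.card_inter_add_card_sdiff (Ici i) S
    rw [Nat.even_iff]
    omega
  -- zeroCrossings as a sum of indicators over i
  have hzc : ∀ S : Finset (Fin n), ((zeroCrossings n S : ℕ) : ℝ)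
      = ∑ i : Fin n, (if (Even (Ici i).card ∧ (Ici i ∩ S).card = (Ici i).card / 2)
          then (1:ℝ) else 0) := by
    intro S
    unfold zeroCrossings
    rw [Finset.card_filter]
    push_cast
    apply Finset.sum_congr rfl
    intro i _
    by_cases h : (Even (Ici i).card ∧ (Ici i ∩ S).card = (Ici i).card / 2)
    · rw [if_pos ((hbal i S).mpr h), if_pos h]
    · rw [if_neg (fun hc => h ((hbal i S).mp hc)), if_neg h]
  -- per-i value
  have hq : ∀ i : Fin n,
      (∑ s ∈ range (n+1),
        ((((univ : Finset (Fin n)).powersetCard s).filter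
            (fun S => Even (Ici i).card ∧ (Ici i ∩ S).card = (Ici i).card / 2)).card : ℝ)
          / (n.choose s : ℝ))
      = (if Even (Ici i).card then ((n:ℝ)+1)/(((Ici i).card : ℝ)+1) else 0) := by
    intro i
    by_cases he : Even (Ici i).card
    · rw [if_pos he]
      obtain ⟨k, hk⟩ := he
      have hT : (Ici i).card = 2*k := by omega
      have hkn : 2*k ≤ n := by
        have := Finset.card_le_univ (Ici i)
        rw [Fintype.card_fin] at this
        omega
      have hfe : ∀ s : ℕ, ((univ : Finset (Fin n)).powersetCard s).filter
            (fun S => Even (Ici i).card ∧ (Ici i ∩ S).card = (Ici i).card / 2)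
          = ((univ : Finset (Fin n)).powersetCard s).filter
            (fun S => (Ici i ∩ S).card = k) := by
        intro s
        apply Finset.filter_congr
        intro S _
        have : (Ici i).card / 2 = k := by omega
        simp [this, hT]
      simp only [hfe]
      rw [key_sum (Ici i) hT hkn, hT]
      push_cast
      ring
    · rw [if_neg he]
      have hfe : ∀ s : ℕ, ((univ : Finset (Fin n)).powersetCard s).filter
            (fun S => Even (Ici i).card ∧ (Ici i ∩ S).card = (Ici i).card / 2)
          = ∅ := by
        intro s
        apply Finset.filter_false_of_mem
        intro S _
        exact fun hc => he hc.1
      simp only [hfe, Finset.card_empty, Nat.cast_zero, zero_div, Finset.sum_const_zero]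
  -- swap sums
  unfold expZeroCrossings
  have hswap : ∑ s ∈ Finset.range (n + 1),
      (∑ S ∈ (Finset.univ : Finset (Fin n)).powersetCard s,
        ((zeroCrossings n S : ℕ) : ℝ)) / (n.choose s : ℝ)
      = ∑ i : Fin n, (if Even (Ici i).card then ((n:ℝ)+1)/(((Ici i).card : ℝ)+1) else 0) := by
    have h1 : ∀ s ∈ Finset.range (n+1),
        (∑ S ∈ (Finset.univ : Finset (Fin n)).powersetCard s,
          ((zeroCrossings n S : ℕ) : ℝ)) / (n.choose s : ℝ)
        = ∑ i : Fin n,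
          ((((univ : Finset (Fin n)).powersetCard s).filter
            (fun S => Even (Ici i).card ∧ (Ici i ∩ S).card = (Ici i).card / 2)).card : ℝ)
            / (n.choose s : ℝ) := by
      intro s _
      rw [← Finset.sum_div]
      congr 1
      calc ∑ S ∈ (Finset.univ : Finset (Fin n)).powersetCard s,
            ((zeroCrossings n S : ℕ) : ℝ)
          = ∑ S ∈ (Finset.univ : Finset (Fin n)).powersetCard s, ∑ i : Fin n,
              (if (Even (Ici i).card ∧ (Ici i ∩ S).card = (Ici i).card / 2)
                then (1:ℝ) else 0) := Finset.sum_congr rfl (fun S _ => hzc S)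
        _ = ∑ i : Fin n, ∑ S ∈ (Finset.univ : Finset (Fin n)).powersetCard s,
              (if (Even (Ici i).card ∧ (Ici i ∩ S).card = (Ici i).card / 2)
                then (1:ℝ) else 0) := Finset.sum_comm
        _ = ∑ i : Fin n,
            ((((univ : Finset (Fin n)).powersetCard s).filter
              (fun S => Even (Ici i).card ∧ (Ici i ∩ S).card = (Ici i).card / 2)).card : ℝ) := by
            apply Finset.sum_congr rfl
            intro i _
            rw [Finset.sum_boole]
    rw [Finset.sum_congr rfl h1, Finset.sum_comm]
    exact Finset.sum_congr rfl (fun i _ => hq i)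
  rw [hswap]
  -- divide through and reindex
  rw [Finset.sum_div]
  have h2 : ∀ i : Fin n,
      (if Even (Ici i).card then ((n:ℝ)+1)/(((Ici i).card : ℝ)+1) else 0) / ((n:ℝ)+1)
      = (if Even (n - i.val) then 1/(((n - i.val : ℕ) : ℝ)+1) else 0) := by
    intro i
    rw [Fin.card_Ici]
    by_cases he : Even (n - i.val)
    · rw [if_pos he, if_pos he, div_div, mul_comm, ← div_div, div_self hn1]
    · rw [if_neg he, if_neg he, zero_div]
  rw [Finset.sum_congr rfl (fun i _ => h2 i)]
  rw [Fin.sum_univ_eq_sum_range (fun i => if Even (n - i) then 1/(((n - i : ℕ) : ℝ)+1) else 0) n]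
  rw [← Finset.sum_range_reflect]
  apply Finset.sum_congr rfl
  intro j hj
  rw [mem_range] at hj
  have h3 : n - (n - 1 - j) = j + 1 := by omega
  rw [h3]
  by_cases he : Even (j+1)
  · rw [if_pos he, if_pos he]
    push_cast
    ring_nf
  · rw [if_neg he, if_neg he]

lemma sum_eq_odd (n : ℕ) :
    ∑ j ∈ range n, (if Even (j+1) then 1/((j:ℝ)+2) else 0)
      = ∑ k ∈ range (n/2), 1/(2*(k:ℝ)+3) := by
  induction n with
  | zero => simp
  | succ n ih =>
    rw [Finset.sum_range_succ, ih]
    rcases Nat.even_or_odd n with he | ho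
    · have h1 : ¬ Even (n+1) := by
        rw [Nat.even_add_one]; exact fun h => h he
      rw [if_neg h1, add_zero]
      have : (n+1)/2 = n/2 := by
        rw [Nat.even_iff] at he; omega
      rw [this]
    · have h1 : Even (n+1) := by rw [Nat.even_add_one, Nat.even_iff]; rw [Nat.odd_iff] at ho; omega
      rw [if_pos h1]
      have h2 : (n+1)/2 = n/2 + 1 := by
        rw [Nat.odd_iff] at ho; omega
      rw [h2, Finset.sum_range_succ]
      congr 1
      have h3 : 2*(n/2)+3 = n+2 := by
        rw [Nat.odd_iff] at ho; omega
      have h4 : (2*((n/2 : ℕ):ℝ)+3) = (n:ℝ)+2 := by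
        exact_mod_cast congrArg (Nat.cast : ℕ → ℝ) h3
      rw [h4]

lemma harmonic_real (K : ℕ) :
    ((harmonic K : ℚ) : ℝ) = ∑ k ∈ range K, 1/((k:ℝ)+1) := by
  unfold harmonic
  push_cast
  apply Finset.sum_congr rfl
  intro k _
  rw [one_div]

lemma odd_sum_lower (K : ℕ) :
    (1/4 : ℝ) * Real.log (K+1) ≤ ∑ k ∈ range K, 1/(2*(k:ℝ)+3) := by
  have h1 : (1/4 : ℝ) * Real.log (K+1) ≤ (1/4) * ((harmonic K : ℚ) : ℝ) := by
    have := log_add_one_le_harmonic K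
    push_cast at this ⊢
    nlinarith [this]
  refine h1.trans ?_
  rw [harmonic_real, Finset.mul_sum]
  apply Finset.sum_le_sum
  intro k _
  have hk : (0:ℝ) ≤ (k:ℝ) := Nat.cast_nonneg k
  rw [mul_one_div, div_le_div_iff₀ (by positivity) (by positivity)]
  nlinarith

lemma odd_sum_upper (K : ℕ) :
    ∑ k ∈ range K, 1/(2*(k:ℝ)+3) ≤ (1/2) * (1 + Real.log K) := by
  have h2 : ∑ k ∈ range K, 1/(2*(k:ℝ)+3) ≤ (1/2) * ((harmonic K : ℚ) : ℝ) := by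
    rw [harmonic_real, Finset.mul_sum]
    apply Finset.sum_le_sum
    intro k _
    have hk : (0:ℝ) ≤ (k:ℝ) := Nat.cast_nonneg k
    rw [mul_one_div, div_le_div_iff₀ (by positivity) (by positivity)]
    nlinarith
  refine h2.trans ?_
  have := harmonic_le_one_add_log K
  nlinarith [this]

end Aux

open Finset in
/-- The expected number of zero-crossings is `Θ(log n)`. -/
theorem expZeroCrossings_theta_log :
    ∃ c₁ c₂ : ℝ, 0 < c₁ ∧ 0 < c₂ ∧ ∃ n₀ : ℕ, ∀ n : ℕ, n₀ ≤ n →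
      c₁ * Real.log n ≤ expZeroCrossings n ∧
      expZeroCrossings n ≤ c₂ * Real.log n := by
  refine ⟨1/8, 1, by norm_num, by norm_num, 4, fun n hn => ?_⟩
  have hE : expZeroCrossings n = ∑ k ∈ range (n/2), 1/(2*(k:ℝ)+3) := by
    rw [exp_eq, sum_eq_odd]
  set K := n / 2 with hK
  have hK2 : 2 ≤ K := by omega
  have h2K : n ≤ 2 * K + 1 := by omega
  have hKn : K ≤ n := by omega
  have hn4 : (4:ℝ) ≤ (n:ℝ) := by exact_mod_cast hn
  have hKr : (n:ℝ) ≤ 2 * (K:ℝ) + 1 := by exact_mod_cast h2K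
  have hKr2 : (2:ℝ) ≤ (K:ℝ) := by exact_mod_cast hK2
  have hKnr : (K:ℝ) ≤ (n:ℝ) := by exact_mod_cast hKn
  have hnpos : (0:ℝ) < (n:ℝ) := by linarith
  have hlog1 : (1:ℝ) ≤ Real.log n := by
    rw [← Real.log_exp 1]
    apply Real.log_le_log (Real.exp_pos 1)
    have := Real.exp_one_lt_d9
    linarith
  constructor
  · -- lower bound
    have hsq : (n:ℝ) ≤ ((K:ℝ)+1)^2 := by nlinarith
    have hlog2 : Real.log n ≤ 2 * Real.log ((K:ℝ)+1) := by
      calc Real.log n ≤ Real.log (((K:ℝ)+1)^2) := Real.log_le_log hnpos hsq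
        _ = 2 * Real.log ((K:ℝ)+1) := by
            rw [show ((K:ℝ)+1)^2 = ((K:ℝ)+1)*((K:ℝ)+1) by ring,
              Real.log_mul (by positivity) (by positivity)]
            ring
    have := odd_sum_lower K
    rw [hE]
    push_cast at this
    linarith
  · -- upper bound
    have hlogK : Real.log K ≤ Real.log n := Real.log_le_log (by linarith) hKnr
    have := odd_sum_upper K
    rw [hE]
    linarith
end

section
/- Let k ≥ 1 be odd, let a ∈ ℝ, and let (P_n) and (C_n) be real sequences with P_n = a·n + O(1) and satisfying, for all n ≥ k, the recurrence C_n = P_n + Σ_{p=1}^{n} [C(p−1, (k−1)/2)·C(n−p, (k−1)/2) / C(n,k)] · (C_{p−1} + C_{n−p}), with arbitrary fixed values C_n for n < k. Then C_n = (1/(H_{k+1} − H_{(k+1)/2})) · a · n·ln n + O(n), where H_m = Σ_{j=1}^{m} 1/j denotes the m-th harmonic number. -/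
/-- The `m`-th harmonic number `H_m = Σ_{j=1}^m 1/j`. -/
noncomputable def harmonicNum (m : ℕ) : ℝ := ∑ j ∈ Finset.Icc 1 m, (1 : ℝ) / (j : ℝ)

lemma harmonicNum_zero : harmonicNum 0 = 0 := by simp [harmonicNum]

lemma harmonicNum_succ (n : ℕ) :
    harmonicNum (n+1) = harmonicNum n + 1/((n:ℝ)+1) := by
  rw [harmonicNum, harmonicNum, Finset.sum_Icc_succ_top (by omega)]
  push_cast; ring

lemma harmonicNum_nonneg (n : ℕ) : 0 ≤ harmonicNum n :=
  Finset.sum_nonneg fun j _ => by positivity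

lemma harmonicNum_mono : Monotone harmonicNum := by
  intro i j hij
  exact Finset.sum_le_sum_of_subset_of_nonneg
    (Finset.Icc_subset_Icc_right hij) (fun k _ _ => by positivity)

lemma harmonicNum_eq_harmonic (n : ℕ) : harmonicNum n = (harmonic n : ℝ) := by
  induction n with
  | zero => simp [harmonicNum]
  | succ n ih => rw [harmonicNum_succ, harmonic_succ, ih]; push_cast; ring

lemma log_le_harmonicNum (n : ℕ) : Real.log n ≤ harmonicNum n := by
  have h1 := log_add_one_le_harmonic n
  have h2 : Real.log n ≤ Real.log ((n:ℝ)+1) := by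
    rcases Nat.eq_zero_or_pos n with h | h
    · simp [h]
    · have hn : (0:ℝ) < n := by exact_mod_cast h
      exact Real.log_le_log hn (by linarith)
  rw [harmonicNum_eq_harmonic]
  push_cast at h1 ⊢
  linarith

lemma harmonicNum_le_log (n : ℕ) : harmonicNum n ≤ 1 + Real.log n := by
  rw [harmonicNum_eq_harmonic]; exact harmonic_le_one_add_log n

lemma harmonicNum_le_self (n : ℕ) : harmonicNum n ≤ n := by
  induction n with
  | zero => simp [harmonicNum_zero]
  | succ n ih =>
    rw [harmonicNum_succ]
    push_cast
    have : 1/((n:ℝ)+1) ≤ 1 := by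
      rw [div_le_one (by positivity)]
      linarith [Nat.cast_nonneg (α := ℝ) n]
    linarith

/-- cast of Pascal -/
lemma pascalR (n k : ℕ) : (((n+1).choose (k+1) : ℕ) : ℝ) = (n.choose k : ℝ) + (n.choose (k+1) : ℝ) := by
  exact_mod_cast congrArg (Nat.cast (R := ℝ)) (Nat.choose_succ_succ' n k)

/-- cast of succ_mul_choose_eq, in "divided" form -/
lemma chooseAux (n r : ℕ) :
    ((n+1).choose (r+1) : ℝ) * (1/((n:ℝ)+1)) = (n.choose r : ℝ) * (1/((r:ℝ)+1)) := by
  have h := Nat.add_one_mul_choose_eq n r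
  have h' : ((n:ℝ)+1) * (n.choose r : ℝ) = ((n+1).choose (r+1) : ℝ) * ((r:ℝ)+1) := by
    exact_mod_cast h
  field_simp
  linarith [h']

lemma sum_choose_range (m : ℕ) : ∀ N : ℕ,
    ∑ j ∈ Finset.range (N+1), ((j.choose m : ℕ) : ℝ) = ((N+1).choose (m+1) : ℝ) := by
  intro N
  induction N with
  | zero =>
    cases m with
    | zero => simp
    | succ m =>
      rw [show (0:ℕ)+1 = 1 from rfl, Finset.sum_range_one, Nat.choose_zero_succ,
        Nat.cast_zero, eq_comm, Nat.cast_eq_zero, Nat.choose_eq_zero_iff]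
      omega
  | succ N ih =>
    rw [Finset.sum_range_succ, ih, pascalR (N+1) m]; ring

lemma idV (l : ℕ) : ∀ (m N : ℕ),
    ∑ j ∈ Finset.range (N+1), ((j.choose m : ℝ) * (((N-j).choose l : ℕ) : ℝ))
      = (((N+1).choose (m+l+1) : ℕ) : ℝ) := by
  induction l with
  | zero =>
    intro m N
    simp only [Nat.choose_zero_right, Nat.cast_one, mul_one]
    exact sum_choose_range m N
  | succ l ihl =>
    intro m N
    induction N with
    | zero =>
      rw [show (0:ℕ)+1 = 1 from rfl, Finset.sum_range_one, Nat.sub_zero, Nat.choose_zero_succ,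
        Nat.cast_zero, mul_zero, eq_comm, Nat.cast_eq_zero, Nat.choose_eq_zero_iff]
      omega
    | succ N ihN =>
      rw [Finset.sum_range_succ]
      have hlast : (((N+1).choose m : ℝ) * ((((N+1)-(N+1)).choose (l+1) : ℕ) : ℝ)) = 0 := by
        simp
      rw [hlast, add_zero]
      have hsplit : ∀ j ∈ Finset.range (N+1),
          ((j.choose m : ℝ) * ((((N+1) - j).choose (l+1) : ℕ) : ℝ))
          = (j.choose m : ℝ) * (((N-j).choose (l+1) : ℕ) : ℝ)
            + (j.choose m : ℝ) * (((N-j).choose l : ℕ) : ℝ) := by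
        intro j hj
        have hj' : j ≤ N := Nat.lt_succ_iff.mp (Finset.mem_range.mp hj)
        have h1 : (N+1) - j = (N-j) + 1 := by omega
        rw [h1, Nat.choose_succ_succ' (N-j) l, Nat.cast_add]
        ring
      rw [Finset.sum_congr rfl hsplit, Finset.sum_add_distrib, ihN, ihl m N]
      have h2 : m + (l+1) + 1 = (m + l + 1) + 1 := by omega
      rw [h2, pascalR (N+1) (m+l+1)]; ring

lemma harmonicNum_one : harmonicNum 1 = 1 := by
  rw [show (1:ℕ) = 0+1 from rfl, harmonicNum_succ, harmonicNum_zero]; norm_num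

lemma idI (l : ℕ) : ∀ (m N : ℕ),
    ∑ j ∈ Finset.range (N+1), (j.choose m : ℝ) * (((N-j).choose l : ℕ) : ℝ) * harmonicNum j
      = (((N+1).choose (m+l+1) : ℕ) : ℝ) *
        (harmonicNum (N+1) - harmonicNum (m+l+1) + harmonicNum m) := by
  induction l with
  | zero =>
    intro m N
    induction N with
    | zero =>
      rw [show (0:ℕ)+1 = 1 from rfl, Finset.sum_range_one, harmonicNum_zero, mul_zero]
      cases m with
      | zero => rw [harmonicNum_one, harmonicNum_zero]; norm_num
      | succ m =>
        rw [eq_comm, mul_eq_zero]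
        left
        rw [Nat.cast_eq_zero, Nat.choose_eq_zero_iff]; omega
    | succ N ih =>
      rw [Finset.sum_range_succ]
      have hmid : ∀ j ∈ Finset.range (N+1),
          (j.choose m : ℝ) * ((((N+1)-j).choose 0 : ℕ) : ℝ) * harmonicNum j
            = (j.choose m : ℝ) * (((N-j).choose 0 : ℕ) : ℝ) * harmonicNum j := by
        intro j hj; simp
      rw [Finset.sum_congr rfl hmid, ih]
      simp only [Nat.sub_self, Nat.choose_zero_right, Nat.cast_one, mul_one]
      -- goal: C(N+1,m+1)*(H(N+1) - H(m+1) + H m) + C(N+1,m)*H(N+1)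
      --     = C(N+2,m+0+1)*(H(N+2) - H(m+1) + H m)
      rw [show m+0+1 = m+1 from rfl] -- normalize if needed
      rw [pascalR (N+1) m, harmonicNum_succ (N+1), harmonicNum_succ m]
      have hx := chooseAux (N+1) m
      rw [pascalR (N+1) m] at hx
      linear_combination -hx
  | succ l ihl =>
    intro m N
    induction N with
    | zero =>
      rw [show (0:ℕ)+1 = 1 from rfl, Finset.sum_range_one, harmonicNum_zero, mul_zero]
      rw [eq_comm, mul_eq_zero]
      left
      rw [Nat.cast_eq_zero, Nat.choose_eq_zero_iff]; omega
    | succ N ihN =>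
      rw [Finset.sum_range_succ]
      have hlast : ((N+1).choose m : ℝ) * ((((N+1)-(N+1)).choose (l+1) : ℕ) : ℝ)
          * harmonicNum (N+1) = 0 := by simp
      rw [hlast, add_zero]
      have hsplit : ∀ j ∈ Finset.range (N+1),
          (j.choose m : ℝ) * ((((N+1) - j).choose (l+1) : ℕ) : ℝ) * harmonicNum j
          = (j.choose m : ℝ) * (((N-j).choose (l+1) : ℕ) : ℝ) * harmonicNum j
            + (j.choose m : ℝ) * (((N-j).choose l : ℕ) : ℝ) * harmonicNum j := by
        intro j hj
        have hj' : j ≤ N := Nat.lt_succ_iff.mp (Finset.mem_range.mp hj)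
        have h1 : (N+1) - j = (N-j) + 1 := by omega
        rw [h1, Nat.choose_succ_succ' (N-j) l, Nat.cast_add]
        ring
      rw [Finset.sum_congr rfl hsplit, Finset.sum_add_distrib, ihN, ihl m N]
      have h2 : m + (l+1) + 1 = (m + l + 1) + 1 := by omega
      rw [h2, pascalR (N+1) (m+l+1), harmonicNum_succ (N+1), harmonicNum_succ (m+l+1)]
      have hx := chooseAux (N+1) (m+l+1)
      rw [pascalR (N+1) (m+l+1)] at hx
      push_cast at hx ⊢
      linear_combination -hx

lemma natJC (j m : ℕ) : j * j.choose m = (m+1) * j.choose (m+1) + m * j.choose m := by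
  rcases le_or_gt m j with h | h
  · have h2 := Nat.choose_succ_right_eq j m
    have h3 : j - m + m = j := by omega
    calc j * j.choose m
        = j.choose m * ((j-m)+m) := by rw [h3]; ring
      _ = j.choose m * (j-m) + m * j.choose m := by ring
      _ = j.choose (m+1) * (m+1) + m * j.choose m := by rw [h2]
      _ = (m+1) * j.choose (m+1) + m * j.choose m := by ring
  · rw [Nat.choose_eq_zero_of_lt h, Nat.choose_eq_zero_of_lt (by omega)]
    ring

lemma realJC (j m : ℕ) : (j:ℝ) * (j.choose m : ℝ)
    = ((m:ℝ)+1) * (j.choose (m+1) : ℝ) + (m:ℝ) * (j.choose m : ℝ) := by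
  exact_mod_cast natJC j m

/-- third moment-type identity -/
lemma idJ (m N : ℕ) :
    ∑ j ∈ Finset.range (N+1),
      (j.choose m : ℝ) * (((N-j).choose m : ℕ) : ℝ) * ((j:ℝ) * harmonicNum j)
    = ((m:ℝ)+1) * (((N+1).choose (2*m+2) : ℕ) : ℝ) *
        (harmonicNum (N+1) - harmonicNum (2*m+2) + harmonicNum (m+1))
      + (m:ℝ) * (((N+1).choose (2*m+1) : ℕ) : ℝ) *
        (harmonicNum (N+1) - harmonicNum (2*m+1) + harmonicNum m) := by
  have hsplit : ∀ j ∈ Finset.range (N+1),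
      (j.choose m : ℝ) * (((N-j).choose m : ℕ) : ℝ) * ((j:ℝ) * harmonicNum j)
      = ((m:ℝ)+1) * ((j.choose (m+1) : ℝ) * (((N-j).choose m : ℕ) : ℝ) * harmonicNum j)
        + (m:ℝ) * ((j.choose m : ℝ) * (((N-j).choose m : ℕ) : ℝ) * harmonicNum j) := by
    intro j hj
    have := realJC j m
    calc (j.choose m : ℝ) * (((N-j).choose m : ℕ) : ℝ) * ((j:ℝ) * harmonicNum j)
        = ((j:ℝ) * (j.choose m : ℝ)) * (((N-j).choose m : ℕ) : ℝ) * harmonicNum j := by ring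
      _ = (((m:ℝ)+1) * (j.choose (m+1) : ℝ) + (m:ℝ) * (j.choose m : ℝ))
            * (((N-j).choose m : ℕ) : ℝ) * harmonicNum j := by rw [this]
      _ = _ := by ring
  rw [Finset.sum_congr rfl hsplit, Finset.sum_add_distrib, ← Finset.mul_sum, ← Finset.mul_sum,
    idI m (m+1) N, idI m m N]
  have e1 : m + 1 + m + 1 = 2*m+2 := by omega
  have e2 : m + m + 1 = 2*m+1 := by omega
  rw [e1, e2]
  ring

lemma sum_Icc_one (n : ℕ) (f : ℕ → ℝ) :
    ∑ p ∈ Finset.Icc 1 n, f p = ∑ j ∈ Finset.range n, f (j+1) := by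
  induction n with
  | zero => simp
  | succ n ih => rw [Finset.sum_Icc_succ_top (by omega), ih, Finset.sum_range_succ]

lemma symm_sum (n m : ℕ) (f : ℕ → ℝ) :
    ∑ p ∈ Finset.Icc 1 n, ((p-1).choose m : ℝ) * (((n-p).choose m : ℕ) : ℝ) * f (n-p)
  = ∑ p ∈ Finset.Icc 1 n, ((p-1).choose m : ℝ) * (((n-p).choose m : ℕ) : ℝ) * f (p-1) := by
  refine Finset.sum_nbij' (fun p => n+1-p) (fun p => n+1-p) ?_ ?_ ?_ ?_ ?_
  · intro p hp; rw [Finset.mem_Icc] at hp ⊢; omega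
  · intro p hp; rw [Finset.mem_Icc] at hp ⊢; omega
  · intro p hp; rw [Finset.mem_Icc] at hp; omega
  · intro p hp; rw [Finset.mem_Icc] at hp; omega
  · intro p hp
    rw [Finset.mem_Icc] at hp
    have e1 : n+1-p-1 = n-p := by omega
    have e2 : n-(n+1-p) = p-1 := by omega
    rw [e1, e2]
    ring

lemma icc_to_range (n m : ℕ) (hn : 1 ≤ n) (g : ℕ → ℝ) :
    ∑ p ∈ Finset.Icc 1 n, ((p-1).choose m : ℝ) * (((n-p).choose m : ℕ) : ℝ) * g (p-1)
    = ∑ j ∈ Finset.range ((n-1)+1), (j.choose m : ℝ) * ((((n-1)-j).choose m : ℕ) : ℝ) * g j := by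
  rw [sum_Icc_one]
  have hn' : (n-1)+1 = n := by omega
  rw [hn']
  refine Finset.sum_congr rfl ?_
  intro j hj
  have e1 : j+1-1 = j := by omega
  have e2 : n-(j+1) = (n-1)-j := by omega
  rw [e1, e2]

lemma step_sum (m n : ℕ) (a : ℝ) (φ : ℕ → ℝ) (hn : 2*m+1 ≤ n)
    (hh0 : harmonicNum (2*m+2) - harmonicNum (m+1) ≠ 0)
    (hφ : ∀ j : ℕ, φ j = 1/(harmonicNum (2*m+2) - harmonicNum (m+1)) * a *
      ((j:ℝ) * harmonicNum j + harmonicNum j +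
        ((2*(m:ℝ)+2)*(harmonicNum (2*m+1) - harmonicNum m)
          - (2*(m:ℝ)+1)*(harmonicNum (2*m+2) - harmonicNum (m+1))))) :
    ∑ p ∈ Finset.Icc 1 n,
      (((p-1).choose m : ℝ) * (((n-p).choose m : ℕ) : ℝ) / ((n.choose (2*m+1) : ℕ) : ℝ))
        * (φ (p-1) + φ (n-p))
    = φ n - a * n := by
  have hn1 : 1 ≤ n := by omega
  have hn' : (n-1)+1 = n := by omega
  have hC : (0:ℝ) < ((n.choose (2*m+1) : ℕ) : ℝ) := by
    exact_mod_cast Nat.choose_pos hn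
  set hh : ℝ := harmonicNum (2*m+2) - harmonicNum (m+1) with hhdef
  set δ : ℝ := (2*(m:ℝ)+2)*(harmonicNum (2*m+1) - harmonicNum m) - (2*(m:ℝ)+1)*hh with hδdef
  set u : ℝ := 1/hh * a with hudef
  -- the three basic sums
  have hV : ∑ p ∈ Finset.Icc 1 n,
      ((p-1).choose m : ℝ) * (((n-p).choose m : ℕ) : ℝ) * (fun _ : ℕ => (1:ℝ)) (p-1)
      = ((n.choose (2*m+1) : ℕ) : ℝ) := by
    rw [icc_to_range n m hn1 (fun _ => 1), hn']
    have := idV m m (n-1)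
    have e : m+m+1 = 2*m+1 := by omega
    rw [e, hn'] at this
    rw [← this]
    exact Finset.sum_congr rfl fun j _ => by simp
  have hH : ∑ p ∈ Finset.Icc 1 n,
      ((p-1).choose m : ℝ) * (((n-p).choose m : ℕ) : ℝ) * harmonicNum (p-1)
      = ((n.choose (2*m+1) : ℕ) : ℝ) *
        (harmonicNum n - harmonicNum (2*m+1) + harmonicNum m) := by
    rw [icc_to_range n m hn1 harmonicNum, hn']
    have := idI m m (n-1)
    have e : m+m+1 = 2*m+1 := by omega
    rw [e, hn'] at this
    exact this
  have hJ : ∑ p ∈ Finset.Icc 1 n,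
      ((p-1).choose m : ℝ) * (((n-p).choose m : ℕ) : ℝ)
        * (fun j : ℕ => (j:ℝ) * harmonicNum j) (p-1)
      = ((m:ℝ)+1) * ((n.choose (2*m+2) : ℕ) : ℝ) *
          (harmonicNum n - harmonicNum (2*m+2) + harmonicNum (m+1))
        + (m:ℝ) * ((n.choose (2*m+1) : ℕ) : ℝ) *
          (harmonicNum n - harmonicNum (2*m+1) + harmonicNum m) := by
    rw [icc_to_range n m hn1 (fun j => (j:ℝ) * harmonicNum j), hn']
    have := idJ m (n-1)
    rw [hn'] at this
    exact this
  -- split the main sum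
  have hsplit : ∀ p ∈ Finset.Icc 1 n,
      (((p-1).choose m : ℝ) * (((n-p).choose m : ℕ) : ℝ) / ((n.choose (2*m+1) : ℕ) : ℝ))
        * (φ (p-1) + φ (n-p))
      = (((p-1).choose m : ℝ) * (((n-p).choose m : ℕ) : ℝ) * φ (p-1)
          + ((p-1).choose m : ℝ) * (((n-p).choose m : ℕ) : ℝ) * φ (n-p))
          / ((n.choose (2*m+1) : ℕ) : ℝ) := by
    intro p _; ring
  rw [Finset.sum_congr rfl hsplit, ← Finset.sum_div, Finset.sum_add_distrib,
    symm_sum n m φ]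
  have hφsplit : ∀ p ∈ Finset.Icc 1 n,
      ((p-1).choose m : ℝ) * (((n-p).choose m : ℕ) : ℝ) * φ (p-1)
      = u * (((p-1).choose m : ℝ) * (((n-p).choose m : ℕ) : ℝ)
              * (fun j : ℕ => (j:ℝ) * harmonicNum j) (p-1))
        + u * (((p-1).choose m : ℝ) * (((n-p).choose m : ℕ) : ℝ) * harmonicNum (p-1))
        + (u * δ) * (((p-1).choose m : ℝ) * (((n-p).choose m : ℕ) : ℝ)
              * (fun _ : ℕ => (1:ℝ)) (p-1)) := by
    intro p _
    rw [hφ (p-1)]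
    dsimp only
    ring
  rw [Finset.sum_congr rfl hφsplit, Finset.sum_add_distrib, Finset.sum_add_distrib,
    ← Finset.mul_sum, ← Finset.mul_sum, ← Finset.mul_sum, hV, hH, hJ, hφ n]
  -- closed-form scalar identity
  have hCC := Nat.choose_succ_right_eq n (2*m+1)
  have hCC' : ((n.choose (2*m+2) : ℕ) : ℝ) * (2*(m:ℝ)+2)
      = ((n.choose (2*m+1) : ℕ) : ℝ) * ((n:ℝ) - (2*(m:ℝ)+1)) := by
    have h2 : (2*m+1)+1 = 2*m+2 := by omega
    rw [h2] at hCC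
    have := congrArg (Nat.cast (R := ℝ)) hCC
    push_cast [Nat.cast_sub hn] at this
    linarith
  have hC2 : ((n.choose (2*m+2) : ℕ) : ℝ)
      = ((n.choose (2*m+1) : ℕ) : ℝ) * ((n:ℝ) - (2*(m:ℝ)+1)) / (2*(m:ℝ)+2) := by
    rw [eq_div_iff (by positivity)]
    exact hCC'
  rw [hC2, hudef, hδdef, hhdef]
  have hh0' : harmonicNum (2*m+2) - harmonicNum (m+1) ≠ 0 := by rw [← hhdef]; exact hh0
  field_simp
  ring


lemma sumV (m n : ℕ) (hn : 1 ≤ n) :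
    ∑ p ∈ Finset.Icc 1 n, ((p-1).choose m : ℝ) * (((n-p).choose m : ℕ) : ℝ)
      = ((n.choose (2*m+1) : ℕ) : ℝ) := by
  have hn' : (n-1)+1 = n := by omega
  calc ∑ p ∈ Finset.Icc 1 n, ((p-1).choose m : ℝ) * (((n-p).choose m : ℕ) : ℝ)
      = ∑ p ∈ Finset.Icc 1 n, ((p-1).choose m : ℝ) * (((n-p).choose m : ℕ) : ℝ)
          * (fun _ : ℕ => (1:ℝ)) (p-1) := Finset.sum_congr rfl fun p _ => by simp
    _ = ∑ j ∈ Finset.range ((n-1)+1),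
          (j.choose m : ℝ) * ((((n-1)-j).choose m : ℕ) : ℝ) * (fun _ : ℕ => (1:ℝ)) j :=
        icc_to_range n m hn (fun _ => 1)
    _ = ∑ j ∈ Finset.range ((n-1)+1), (j.choose m : ℝ) * ((((n-1)-j).choose m : ℕ) : ℝ) :=
        Finset.sum_congr rfl fun j _ => by simp
    _ = ((n.choose (2*m+1) : ℕ) : ℝ) := by
        rw [hn']
        have := idV m m (n-1)
        have e : m+m+1 = 2*m+1 := by omega
        rw [e, hn'] at this
        exact this

/-- Classical quicksort with the pivot chosen as the median of a sample of `k` elements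
(`k` odd): if the partitioning cost satisfies `P n = a·n + O(1)` and `C` satisfies the
median-of-`k` quicksort recurrence, then
`C n = (1/(H_{k+1} − H_{(k+1)/2}))·a·n·ln n + O(n)`. -/
theorem quicksort_median_of_k_sample (k : ℕ) (hk : 1 ≤ k) (hodd : Odd k)
    (a : ℝ) (P C : ℕ → ℝ)
    (hP : ∃ K : ℝ, ∀ n : ℕ, |P n - a * (n : ℝ)| ≤ K)
    (hrec : ∀ n : ℕ, k ≤ n →
      C n = P n + ∑ p ∈ Finset.Icc 1 n,
        (((p - 1).choose ((k - 1) / 2) : ℝ) * ((n - p).choose ((k - 1) / 2) : ℝ) /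
            (n.choose k : ℝ)) * (C (p - 1) + C (n - p))) :
    ∃ K' : ℝ, ∀ n : ℕ, 1 ≤ n →
      |C n - 1 / (harmonicNum (k + 1) - harmonicNum ((k + 1) / 2)) *
          a * (n : ℝ) * Real.log n| ≤ K' * n := by
  obtain ⟨K, hK⟩ := hP
  obtain ⟨m, hm⟩ := hodd
  subst hm
  simp only [show (2*m+1-1)/2 = m from by omega] at hrec
  simp only [show 2*m+1+1 = 2*m+2 from by omega, show (2*m+2)/2 = m+1 from by omega]
  -- positivity of the harmonic difference
  have hmono : harmonicNum (m+1) < harmonicNum (2*m+2) := by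
    have h1 : harmonicNum (m+1) < harmonicNum (m+2) := by
      rw [show m+2 = (m+1)+1 from rfl, harmonicNum_succ (m+1)]
      have : (0:ℝ) < 1/(((m+1:ℕ):ℝ)+1) := by positivity
      push_cast at this ⊢
      linarith
    exact lt_of_lt_of_le h1 (harmonicNum_mono (by omega))
  have hh0 : harmonicNum (2*m+2) - harmonicNum (m+1) ≠ 0 := by
    have := sub_pos.mpr hmono
    linarith
  set φ : ℕ → ℝ := fun j => 1/(harmonicNum (2*m+2) - harmonicNum (m+1)) * a *
      ((j:ℝ) * harmonicNum j + harmonicNum j +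
        ((2*(m:ℝ)+2)*(harmonicNum (2*m+1) - harmonicNum m)
          - (2*(m:ℝ)+1)*(harmonicNum (2*m+2) - harmonicNum (m+1)))) with hφdef
  have hφ : ∀ j : ℕ, φ j = 1/(harmonicNum (2*m+2) - harmonicNum (m+1)) * a *
      ((j:ℝ) * harmonicNum j + harmonicNum j +
        ((2*(m:ℝ)+2)*(harmonicNum (2*m+1) - harmonicNum m)
          - (2*(m:ℝ)+1)*(harmonicNum (2*m+2) - harmonicNum (m+1)))) := fun j => by
    rw [hφdef]
  -- the exact recurrence for D = C - φ
  have hD : ∀ n : ℕ, 2*m+1 ≤ n → C n - φ n = (P n - a * n) +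
      ∑ p ∈ Finset.Icc 1 n,
        (((p - 1).choose m : ℝ) * ((n - p).choose m : ℝ) / (n.choose (2*m+1) : ℝ))
          * ((C (p-1) - φ (p-1)) + (C (n-p) - φ (n-p))) := by
    intro n hn
    have h1 := hrec n hn
    have h2 := step_sum m n a φ hn hh0 hφ
    have h3 : ∑ p ∈ Finset.Icc 1 n,
        (((p - 1).choose m : ℝ) * ((n - p).choose m : ℝ) / (n.choose (2*m+1) : ℝ))
          * (C (p-1) + C (n-p))
      = (∑ p ∈ Finset.Icc 1 n,
        (((p - 1).choose m : ℝ) * ((n - p).choose m : ℝ) / (n.choose (2*m+1) : ℝ))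
          * ((C (p-1) - φ (p-1)) + (C (n-p) - φ (n-p))))
        + ∑ p ∈ Finset.Icc 1 n,
        (((p - 1).choose m : ℝ) * ((n - p).choose m : ℝ) / (n.choose (2*m+1) : ℝ))
          * (φ (p-1) + φ (n-p)) := by
      rw [← Finset.sum_add_distrib]
      exact Finset.sum_congr rfl fun p _ => by ring
    rw [h1, h3, h2]
    ring
  set A0 : ℝ := ∑ j ∈ Finset.range (2*m+1), |C j - φ j| with hA0def
  have hA0nn : 0 ≤ A0 := Finset.sum_nonneg fun j _ => abs_nonneg _
  have hA0 : ∀ j : ℕ, j < 2*m+1 → |C j - φ j| ≤ A0 := fun j hj =>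
    Finset.single_le_sum (f := fun i => |C i - φ i|) (fun i _ => abs_nonneg _)
      (Finset.mem_range.mpr hj)
  have hKnn : 0 ≤ K := le_trans (abs_nonneg _) (hK 0)
  -- main induction
  have main : ∀ n : ℕ, |C n - φ n| ≤ A0 + (K + A0) * n := by
    intro n
    induction n using Nat.strong_induction_on with
    | _ n ih =>
      rcases lt_or_ge n (2*m+1) with hlt | hge
      · have h := hA0 n hlt
        have : (0:ℝ) ≤ (K + A0) * n := mul_nonneg (by linarith) (Nat.cast_nonneg n)
        linarith
      · have hn1 : 1 ≤ n := by omega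
        have hcn1 : (1:ℝ) ≤ (n:ℝ) := by exact_mod_cast hn1
        have hCpos : (0:ℝ) < (n.choose (2*m+1) : ℝ) := by
          exact_mod_cast Nat.choose_pos hge
        rw [hD n hge]
        have habs : |∑ p ∈ Finset.Icc 1 n,
            (((p - 1).choose m : ℝ) * ((n - p).choose m : ℝ) / (n.choose (2*m+1) : ℝ))
              * ((C (p-1) - φ (p-1)) + (C (n-p) - φ (n-p)))|
            ≤ ∑ p ∈ Finset.Icc 1 n,
            (((p - 1).choose m : ℝ) * ((n - p).choose m : ℝ) / (n.choose (2*m+1) : ℝ))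
              * (2*A0 + (K + A0) * ((n:ℝ) - 1)) := by
          refine le_trans (Finset.abs_sum_le_sum_abs _ _) (Finset.sum_le_sum ?_)
          intro p hp
          rw [Finset.mem_Icc] at hp
          have hw : (0:ℝ) ≤ ((p - 1).choose m : ℝ) * ((n - p).choose m : ℝ)
              / (n.choose (2*m+1) : ℝ) := by positivity
          rw [abs_mul, abs_of_nonneg hw]
          refine mul_le_mul_of_nonneg_left ?_ hw
          have i1 := ih (p-1) (by omega)
          have i2 := ih (n-p) (by omega)
          have e0 : ((p-1 : ℕ):ℝ) = (p:ℝ) - 1 := by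
            push_cast [Nat.cast_sub hp.1]; ring
          have e1 : ((n-p : ℕ):ℝ) = (n:ℝ) - (p:ℝ) := by
            push_cast [Nat.cast_sub hp.2]; ring
          calc |(C (p-1) - φ (p-1)) + (C (n-p) - φ (n-p))|
              ≤ |C (p-1) - φ (p-1)| + |C (n-p) - φ (n-p)| := abs_add_le _ _
            _ ≤ (A0 + (K + A0) * ((p-1 : ℕ):ℝ)) + (A0 + (K + A0) * ((n-p : ℕ):ℝ)) :=
                add_le_add i1 i2
            _ = 2*A0 + (K + A0) * ((n:ℝ) - 1) := by rw [e0, e1]; ring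
        have hsum : ∑ p ∈ Finset.Icc 1 n,
            (((p - 1).choose m : ℝ) * ((n - p).choose m : ℝ) / (n.choose (2*m+1) : ℝ))
              * (2*A0 + (K + A0) * ((n:ℝ) - 1))
            = 2*A0 + (K + A0) * ((n:ℝ) - 1) := by
          rw [← Finset.sum_mul]
          have hdiv : ∑ p ∈ Finset.Icc 1 n,
              (((p - 1).choose m : ℝ) * ((n - p).choose m : ℝ) / (n.choose (2*m+1) : ℝ)) = 1 := by
            rw [← Finset.sum_div, sumV m n hn1, div_self (ne_of_gt hCpos)]
          rw [hdiv, one_mul]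
        rw [hsum] at habs
        have h1 := hK n
        calc |(P n - a * n) + ∑ p ∈ Finset.Icc 1 n,
            (((p - 1).choose m : ℝ) * ((n - p).choose m : ℝ) / (n.choose (2*m+1) : ℝ))
              * ((C (p-1) - φ (p-1)) + (C (n-p) - φ (n-p)))|
            ≤ |P n - a * n| + |∑ p ∈ Finset.Icc 1 n,
            (((p - 1).choose m : ℝ) * ((n - p).choose m : ℝ) / (n.choose (2*m+1) : ℝ))
              * ((C (p-1) - φ (p-1)) + (C (n-p) - φ (n-p)))| := abs_add_le _ _
          _ ≤ K + (2*A0 + (K + A0) * ((n:ℝ) - 1)) := add_le_add h1 habs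
          _ = A0 + (K + A0) * (n:ℝ) := by ring
  -- final assembly
  set δ : ℝ := (2*(m:ℝ)+2)*(harmonicNum (2*m+1) - harmonicNum m)
      - (2*(m:ℝ)+1)*(harmonicNum (2*m+2) - harmonicNum (m+1)) with hδdef
  set u : ℝ := 1/(harmonicNum (2*m+2) - harmonicNum (m+1)) * a with hudef
  refine ⟨K + 2*A0 + |u| * (2 + |δ|), ?_⟩
  intro n hn
  have hcn1 : (1:ℝ) ≤ (n:ℝ) := by exact_mod_cast hn
  have hDn := main n
  have hφn : φ n = u * ((n:ℝ) * harmonicNum n + harmonicNum n + δ) := hφ n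
  have hsplit : C n - u * (n:ℝ) * Real.log n
      = (C n - φ n) + u * ((n:ℝ) * (harmonicNum n - Real.log n) + harmonicNum n + δ) := by
    rw [hφn]; ring
  rw [hsplit]
  have hl1 : Real.log n ≤ harmonicNum n := log_le_harmonicNum n
  have hl2 : harmonicNum n ≤ 1 + Real.log n := harmonicNum_le_log n
  have hl3 : harmonicNum n ≤ (n:ℝ) := harmonicNum_le_self n
  have hl4 : (0:ℝ) ≤ harmonicNum n := harmonicNum_nonneg n
  have b0 : |(n:ℝ) * (harmonicNum n - Real.log n) + harmonicNum n + δ| ≤ (2 + |δ|) * n := by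
    have t1 : |(n:ℝ) * (harmonicNum n - Real.log n) + harmonicNum n + δ|
        ≤ |(n:ℝ) * (harmonicNum n - Real.log n)| + |harmonicNum n| + |δ| := by
      calc |(n:ℝ) * (harmonicNum n - Real.log n) + harmonicNum n + δ|
          ≤ |(n:ℝ) * (harmonicNum n - Real.log n) + harmonicNum n| + |δ| := abs_add_le _ _
        _ ≤ |(n:ℝ) * (harmonicNum n - Real.log n)| + |harmonicNum n| + |δ| := by
            linarith [abs_add_le ((n:ℝ) * (harmonicNum n - Real.log n)) (harmonicNum n)]
    have t2 : |(n:ℝ) * (harmonicNum n - Real.log n)| ≤ (n:ℝ) := by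
      rw [abs_of_nonneg (by nlinarith)]
      nlinarith
    have t3 : |harmonicNum n| ≤ (n:ℝ) := by rw [abs_of_nonneg hl4]; exact hl3
    have t4 : |δ| ≤ |δ| * n := le_mul_of_one_le_right (abs_nonneg δ) hcn1
    nlinarith
  have b1 : |u * ((n:ℝ) * (harmonicNum n - Real.log n) + harmonicNum n + δ)|
      ≤ |u| * ((2 + |δ|) * n) := by
    rw [abs_mul]
    exact mul_le_mul_of_nonneg_left b0 (abs_nonneg u)
  have hA0n : A0 ≤ A0 * n := le_mul_of_one_le_right hA0nn hcn1
  calc |(C n - φ n) + u * ((n:ℝ) * (harmonicNum n - Real.log n) + harmonicNum n + δ)|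
      ≤ |C n - φ n| + |u * ((n:ℝ) * (harmonicNum n - Real.log n) + harmonicNum n + δ)| :=
        abs_add_le _ _
    _ ≤ (A0 + (K + A0) * n) + |u| * ((2 + |δ|) * n) := add_le_add hDn b1
    _ ≤ (K + 2*A0 + |u| * (2 + |δ|)) * n := by nlinarith
end

section
/- Let n ≥ 3 and let e be any function assigning to each pair of nonnegative integers (s, ℓ) with s + ℓ ≤ n−2 a value e(s,ℓ) ∈ [0,1], such that e(s,ℓ) ≤ exp(−2·n^{1/6}/9) whenever max(s,ℓ) ≥ n^{3/4} and |s − ℓ| ≥ n^{3/4}. Then (1/C(n,2)) · Σ_{s+ℓ ≤ n−2} [(1 − e(s,ℓ))·min(s,ℓ) + e(s,ℓ)·max(s,ℓ)] = n/6 + o(n). Consequently, the sampling-based strategy whose probability of guessing the wrong relation between s and ℓ is e(s,ℓ) has average partitioning cost (3/2)·n + o(n). -/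
open Filter Finset

private lemma sq_sum (k : ℕ) : 6 * ∑ j ∈ range (k + 1), j * j = k * (k + 1) * (2 * k + 1) := by
  induction k with
  | zero => simp
  | succ k ih =>
    rw [Finset.sum_range_succ, Nat.mul_add, ih]
    ring

private lemma halves (m : ℕ) :
    m / 2 * ((m + 1) / 2) + (m + 1) = (m + 2) / 2 * ((m + 3) / 2) := by
  obtain ⟨k, rfl | rfl⟩ := Nat.even_or_odd' m
  · have h1 : 2 * k / 2 = k := by omega
    have h2 : (2 * k + 1) / 2 = k := by omega
    have h3 : (2 * k + 2) / 2 = k + 1 := by omega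
    have h4 : (2 * k + 3) / 2 = k + 1 := by omega
    rw [h1, h2, h3, h4]; ring
  · have h1 : (2 * k + 1) / 2 = k := by omega
    have h2 : (2 * k + 2) / 2 = k + 1 := by omega
    have h3 : (2 * k + 3) / 2 = k + 1 := by omega
    have h4 : (2 * k + 4) / 2 = k + 2 := by omega
    rw [h1, h2, h3, h4]; ring

private lemma diag_eq : ∀ m : ℕ, ∑ s ∈ range (m + 1), min s (m - s) = m / 2 * ((m + 1) / 2) := by
  intro m
  induction m using Nat.twoStepInduction with
  | zero => simp
  | one => decide
  | more m ih _ =>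
    have hstep : ∑ s ∈ range (m + 2 + 1), min s (m + 2 - s)
        = ∑ i ∈ range (m + 1), min i (m - i) + (m + 1) := by
      rw [Finset.sum_range_succ, Finset.sum_range_succ']
      have e1 : min (m + 2) (m + 2 - (m + 2)) = 0 := by omega
      have e2 : min 0 (m + 2 - 0) = 0 := by omega
      rw [e1, e2, add_zero, add_zero]
      rw [show (∑ i ∈ range (m + 1), min (i + 1) (m + 2 - (i + 1)))
          = ∑ i ∈ range (m + 1), (min i (m - i) + 1) from
        Finset.sum_congr rfl fun i hi => by
          have := Finset.mem_range.mp hi; omega]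
      rw [Finset.sum_add_distrib, Finset.sum_const, Finset.card_range, smul_eq_mul, mul_one]
    rw [hstep, ih, halves]

private def G (M : ℕ) : ℕ := ∑ s ∈ range (M + 1), ∑ l ∈ range (M + 1 - s), min s l

private lemma G_succ (M : ℕ) :
    G (M + 1) = G M + (M + 1) / 2 * ((M + 2) / 2) := by
  have hdiag : ∑ s ∈ range (M + 1), min s (M + 1 - s) = (M + 1) / 2 * ((M + 2) / 2) := by
    have h := diag_eq (M + 1)
    rw [Finset.sum_range_succ] at h
    have e1 : min (M + 1) (M + 1 - (M + 1)) = 0 := by omega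
    rw [e1, add_zero] at h
    exact h
  have h1 : ∀ s ∈ range (M + 1),
      (∑ l ∈ range (M + 1 + 1 - s), min s l)
        = (∑ l ∈ range (M + 1 - s), min s l) + min s (M + 1 - s) := by
    intro s hs
    have hs' : s ≤ M := Nat.lt_succ_iff.mp (Finset.mem_range.mp hs)
    have h2 : M + 1 + 1 - s = (M + 1 - s) + 1 := by omega
    rw [h2, Finset.sum_range_succ]
  calc G (M + 1)
      = (∑ s ∈ range (M + 1), ((∑ l ∈ range (M + 1 - s), min s l) + min s (M + 1 - s))) + 0 := by
        rw [G, Finset.sum_range_succ, Finset.sum_congr rfl h1]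
        simp
    _ = G M + (M + 1) / 2 * ((M + 2) / 2) := by
        rw [Finset.sum_add_distrib, add_zero, hdiag]; rfl

private lemma G_eq (M : ℕ) : G M = ∑ j ∈ range (M + 1), j / 2 * ((j + 1) / 2) := by
  induction M with
  | zero => decide
  | succ M ih => rw [G_succ, ih, Finset.sum_range_succ (n := M + 1), Finset.sum_range_succ]

private lemma quarter (j : ℕ) :
    4 * (j / 2 * ((j + 1) / 2)) ≤ j * j ∧ j * j ≤ 4 * (j / 2 * ((j + 1) / 2)) + 1 := by
  obtain ⟨k, rfl | rfl⟩ := Nat.even_or_odd' j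
  · have h1 : 2 * k / 2 = k := by omega
    have h2 : (2 * k + 1) / 2 = k := by omega
    rw [h1, h2]
    constructor <;> nlinarith
  · have h1 : (2 * k + 1) / 2 = k := by omega
    have h2 : (2 * k + 2) / 2 = k + 1 := by omega
    rw [h1, h2]
    constructor <;> nlinarith

private lemma G_bounds (M : ℕ) :
    24 * G M ≤ M * (M + 1) * (2 * M + 1) ∧
      M * (M + 1) * (2 * M + 1) ≤ 24 * G M + 6 * (M + 1) := by
  rw [G_eq]
  have h1 : (∑ j ∈ range (M + 1), 4 * (j / 2 * ((j + 1) / 2)))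
      ≤ ∑ j ∈ range (M + 1), j * j := Finset.sum_le_sum fun j _ => (quarter j).1
  have h2 : (∑ j ∈ range (M + 1), j * j)
      ≤ ∑ j ∈ range (M + 1), (4 * (j / 2 * ((j + 1) / 2)) + 1) :=
    Finset.sum_le_sum fun j _ => (quarter j).2
  rw [Finset.sum_add_distrib, Finset.sum_const, Finset.card_range, smul_eq_mul, mul_one] at h2
  rw [← Finset.mul_sum] at h1 h2
  have h3 := sq_sum M
  constructor <;> nlinarith

set_option maxHeartbeats 1600000 in

/-- Sampling-based strategies with exponentially small guessing error achieve the
optimal additional cost term up to `o(n)`: if `e(n,s,ℓ) ∈ [0,1]` is the probability of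
guessing the wrong relation between `s` and `ℓ`, and
`e(n,s,ℓ) ≤ exp(−2·n^{1/6}/9)` whenever `max(s,ℓ) ≥ n^{3/4}` and `|s−ℓ| ≥ n^{3/4}`,
then `(1/C(n,2)) · Σ_{s+ℓ ≤ n−2} ((1−e)·min(s,ℓ) + e·max(s,ℓ)) = n/6 + o(n)`. -/
theorem sampling_strategy_act (e : ℕ → ℕ → ℕ → ℝ)
    (he01 : ∀ n s l : ℕ, s + l ≤ n - 2 → 0 ≤ e n s l ∧ e n s l ≤ 1)
    (hebound : ∀ n s l : ℕ, s + l ≤ n - 2 →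
      (n : ℝ) ^ ((3 : ℝ) / 4) ≤ ((max s l : ℕ) : ℝ) →
      (n : ℝ) ^ ((3 : ℝ) / 4) ≤ |(s : ℝ) - (l : ℝ)| →
      e n s l ≤ Real.exp (-2 * (n : ℝ) ^ ((1 : ℝ) / 6) / 9)) :
    Tendsto (fun n : ℕ =>
        (1 / (n.choose 2 : ℝ) *
            (∑ s ∈ Finset.range (n - 1), ∑ l ∈ Finset.range (n - 1 - s),
              ((1 - e n s l) * ((min s l : ℕ) : ℝ) + e n s l * ((max s l : ℕ) : ℝ))) -
          (n : ℝ) / 6) / (n : ℝ))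
      atTop (nhds 0) := by
  apply squeeze_zero_norm' (a := fun n : ℕ =>
      1 / (n : ℝ) + 3 * (n : ℝ) ^ (-(1 / 4) : ℝ) + 3 * Real.exp (-2 * (n : ℝ) ^ ((1 : ℝ) / 6) / 9))
  · filter_upwards [eventually_ge_atTop 3] with n hn
    rw [Real.norm_eq_abs]
    obtain ⟨M, hM1, rfl⟩ : ∃ M, 1 ≤ M ∧ n = M + 2 := ⟨n - 2, by omega, by omega⟩
    have hr1 : M + 2 - 1 = M + 1 := by omega
    rw [hr1]
    set N : ℝ := ((M + 2 : ℕ) : ℝ) with hN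
    set ε : ℝ := Real.exp (-2 * N ^ ((1 : ℝ) / 6) / 9) with hε
    set B : ℝ := N ^ ((3 : ℝ) / 4) + ε * N with hB
    set S : ℝ := ∑ s ∈ range (M + 1), ∑ l ∈ range (M + 1 - s),
        ((1 - e (M + 2) s l) * ((min s l : ℕ) : ℝ) + e (M + 2) s l * ((max s l : ℕ) : ℝ)) with hS
    set C : ℝ := (((M + 2).choose 2 : ℕ) : ℝ) with hC
    have hNval : N = (M : ℝ) + 2 := by rw [hN]; push_cast; ring
    have hNpos : (0 : ℝ) < N := by rw [hNval]; positivity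
    have hε0 : 0 ≤ ε := hε ▸ (Real.exp_pos _).le
    have hrp0 : (0 : ℝ) ≤ N ^ ((3 : ℝ) / 4) := Real.rpow_nonneg hNpos.le _
    have hB0 : 0 ≤ B := by rw [hB]; positivity
    -- per-term bounds
    have hterm : ∀ s ∈ range (M + 1), ∀ l ∈ range (M + 1 - s),
        0 ≤ e (M + 2) s l * (((max s l : ℕ) : ℝ) - ((min s l : ℕ) : ℝ)) ∧
        e (M + 2) s l * (((max s l : ℕ) : ℝ) - ((min s l : ℕ) : ℝ)) ≤ B := by
      intro s hs l hl
      have hs' := Finset.mem_range.mp hs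
      have hl' := Finset.mem_range.mp hl
      have hsl : s + l ≤ M + 2 - 2 := by omega
      obtain ⟨he0, he1⟩ := he01 (M + 2) s l hsl
      have hd : ((max s l : ℕ) : ℝ) - ((min s l : ℕ) : ℝ) = |(s : ℝ) - (l : ℝ)| := by
        rcases le_total s l with h | h
        · rw [max_eq_right h, min_eq_left h, abs_sub_comm,
            abs_of_nonneg (sub_nonneg.2 (by exact_mod_cast h))]
        · rw [max_eq_left h, min_eq_right h,
            abs_of_nonneg (sub_nonneg.2 (by exact_mod_cast h))]
      have hd0 : 0 ≤ ((max s l : ℕ) : ℝ) - ((min s l : ℕ) : ℝ) := by rw [hd]; positivity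
      refine ⟨mul_nonneg he0 hd0, ?_⟩
      by_cases hc : N ^ ((3 : ℝ) / 4) ≤ |(s : ℝ) - (l : ℝ)|
      · have hmin0 : (0 : ℝ) ≤ ((min s l : ℕ) : ℝ) := Nat.cast_nonneg _
        have hmax : N ^ ((3 : ℝ) / 4) ≤ ((max s l : ℕ) : ℝ) := by
          rw [← hd] at hc; linarith
        rw [hN] at hmax hc
        have he := hebound (M + 2) s l hsl hmax hc
        rw [← hN, ← hε] at he
        have hmaxn : ((max s l : ℕ) : ℝ) ≤ N := by
          rw [hN]; exact_mod_cast (by omega : max s l ≤ M + 2)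
        have h1 : e (M + 2) s l * (((max s l : ℕ) : ℝ) - ((min s l : ℕ) : ℝ)) ≤ ε * N :=
          mul_le_mul he (by linarith) hd0 hε0
        rw [hB]; linarith
      · push_neg at hc
        have h1 : e (M + 2) s l * (((max s l : ℕ) : ℝ) - ((min s l : ℕ) : ℝ))
            ≤ 1 * (N ^ ((3 : ℝ) / 4)) :=
          mul_le_mul he1 (by rw [hd]; exact hc.le) hd0 one_pos.le
        have hεn : 0 ≤ ε * N := mul_nonneg hε0 hNpos.le
        rw [hB]; linarith
    -- choose 2
    have hdvd : 2 ∣ (M + 2) * (M + 1) := by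
      obtain ⟨k, rfl | rfl⟩ := Nat.even_or_odd' M
      · exact ⟨(k + 1) * (2 * k + 1), by ring⟩
      · exact ⟨(2 * k + 3) * (k + 1), by ring⟩
    have h2C : 2 * ((M + 2).choose 2) = (M + 2) * (M + 1) := by
      rw [Nat.choose_two_right, hr1, Nat.mul_div_cancel' hdvd]
    have hCval : C = ((M : ℝ) + 1) * ((M : ℝ) + 2) / 2 := by
      have h : (2 : ℝ) * C = ((M : ℝ) + 2) * ((M : ℝ) + 1) := by
        rw [hC]; exact_mod_cast congrArg (Nat.cast : ℕ → ℝ) h2C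
      linarith
    -- now make everything opaque
    clear_value N ε B S C
    have hCpos : 0 < C := by rw [hCval]; positivity
    -- split the sum
    set E : ℝ := ∑ s ∈ range (M + 1), ∑ l ∈ range (M + 1 - s),
        (e (M + 2) s l * (((max s l : ℕ) : ℝ) - ((min s l : ℕ) : ℝ))) with hE
    have hGcast : ((G M : ℕ) : ℝ)
        = ∑ s ∈ range (M + 1), ∑ l ∈ range (M + 1 - s), ((min s l : ℕ) : ℝ) := by
      simp only [G]; push_cast; rfl
    have hsplit : S = ((G M : ℕ) : ℝ) + E := by
      rw [hS, hGcast, hE, ← Finset.sum_add_distrib]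
      refine Finset.sum_congr rfl fun s _ => ?_
      rw [← Finset.sum_add_distrib]
      exact Finset.sum_congr rfl fun l _ => by ring
    have hE0 : 0 ≤ E := by
      rw [hE]
      exact Finset.sum_nonneg fun s hs => Finset.sum_nonneg fun l hl => (hterm s hs l hl).1
    have hEB : E ≤ ((M : ℝ) + 1) ^ 2 * B := by
      rw [hE]
      calc (∑ s ∈ range (M + 1), ∑ l ∈ range (M + 1 - s),
            (e (M + 2) s l * (((max s l : ℕ) : ℝ) - ((min s l : ℕ) : ℝ))))
          ≤ ∑ s ∈ range (M + 1), ∑ _l ∈ range (M + 1 - s), B :=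
            Finset.sum_le_sum fun s hs => Finset.sum_le_sum fun l hl => (hterm s hs l hl).2
        _ = ∑ s ∈ range (M + 1), ((M + 1 - s : ℕ) : ℝ) * B := by
            refine Finset.sum_congr rfl fun s _ => ?_
            rw [Finset.sum_const, Finset.card_range, nsmul_eq_mul]
        _ ≤ ∑ s ∈ range (M + 1), ((M : ℝ) + 1) * B := by
            refine Finset.sum_le_sum fun s _ => ?_
            apply mul_le_mul_of_nonneg_right _ hB0
            have h : ((M + 1 - s : ℕ) : ℝ) ≤ ((M + 1 : ℕ) : ℝ) := by
              exact_mod_cast (by omega : M + 1 - s ≤ M + 1)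
            push_cast at h; push_cast; linarith
        _ = ((M : ℝ) + 1) ^ 2 * B := by
            rw [Finset.sum_const, Finset.card_range, nsmul_eq_mul]
            push_cast; ring
    clear_value E
    -- G/C bound
    obtain ⟨hG1, hG2⟩ := G_bounds M
    have hg1 : 24 * ((G M : ℕ) : ℝ) ≤ (M : ℝ) * ((M : ℝ) + 1) * (2 * (M : ℝ) + 1) := by
      exact_mod_cast hG1
    have hg2 : (M : ℝ) * ((M : ℝ) + 1) * (2 * (M : ℝ) + 1)
        ≤ 24 * ((G M : ℕ) : ℝ) + 6 * ((M : ℝ) + 1) := by exact_mod_cast hG2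
    have hm1 : (1 : ℝ) ≤ (M : ℝ) := by exact_mod_cast hM1
    have key1 : |((G M : ℕ) : ℝ) / C - N / 6| ≤ 7 / 12 := by
      rw [abs_le]
      constructor
      · have h : (N / 6 - 7 / 12) * C ≤ ((G M : ℕ) : ℝ) := by
          rw [hNval, hCval]; nlinarith [hg2, hm1]
        have h' : N / 6 - 7 / 12 ≤ ((G M : ℕ) : ℝ) / C := (le_div_iff₀ hCpos).mpr h
        linarith
      · have h : ((G M : ℕ) : ℝ) ≤ (7 / 12 + N / 6) * C := by
          rw [hNval, hCval]; nlinarith [hg1, hm1]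
        have h' : ((G M : ℕ) : ℝ) / C ≤ 7 / 12 + N / 6 := (div_le_iff₀ hCpos).mpr h
        linarith
    have key2 : E / C ≤ 2 * B := by
      rw [div_le_iff₀ hCpos, hCval]
      nlinarith [hEB, hB0, hm1]
    rw [hsplit]
    have hid : 1 / C * (((G M : ℕ) : ℝ) + E) - N / 6
        = (((G M : ℕ) : ℝ) / C - N / 6) + E / C := by
      field_simp
      ring
    have habs : |(((G M : ℕ) : ℝ) / C - N / 6) + E / C| ≤ 7 / 12 + 2 * B := by
      refine (abs_add_le _ _).trans ?_
      have hEC : |E / C| = E / C := abs_of_nonneg (div_nonneg hE0 hCpos.le)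
      rw [hEC]; linarith
    have i1 : (7 / 12 : ℝ) / N ≤ 1 / N := by gcongr <;> norm_num
    have i2 : 2 * N ^ ((3 : ℝ) / 4) / N = 2 * N ^ (-(1 / 4) : ℝ) := by
      rw [mul_div_assoc]
      congr 1
      rw [show (-(1 / 4) : ℝ) = (3 : ℝ) / 4 - 1 by norm_num, Real.rpow_sub hNpos, Real.rpow_one]
    have i3 : (0 : ℝ) ≤ N ^ (-(1 / 4) : ℝ) := Real.rpow_nonneg hNpos.le _
    have i4 : 2 * ε * N / N = 2 * ε := by
      rw [mul_div_assoc, div_self hNpos.ne', mul_one]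
    calc |(1 / C * (((G M : ℕ) : ℝ) + E) - N / 6) / N|
        = |(((G M : ℕ) : ℝ) / C - N / 6) + E / C| / N := by
          rw [hid, abs_div, abs_of_nonneg hNpos.le]
      _ ≤ (7 / 12 + 2 * B) / N := by gcongr
      _ = (7 / 12 : ℝ) / N + 2 * N ^ ((3 : ℝ) / 4) / N + 2 * ε * N / N := by rw [hB]; ring
      _ ≤ 1 / N + 3 * N ^ (-(1 / 4) : ℝ) + 3 * ε := by rw [i2, i4]; linarith
  · have h1 : Tendsto (fun n : ℕ => 1 / (n : ℝ)) atTop (nhds 0) :=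
      tendsto_one_div_atTop_nhds_zero_nat
    have h2 : Tendsto (fun n : ℕ => (n : ℝ) ^ (-(1 / 4) : ℝ)) atTop (nhds 0) :=
      (tendsto_rpow_neg_atTop (by norm_num : (0 : ℝ) < 1 / 4)).comp tendsto_natCast_atTop_atTop
    have h4 : Tendsto (fun n : ℕ => (n : ℝ) ^ ((1 : ℝ) / 6)) atTop atTop :=
      (tendsto_rpow_atTop (by norm_num)).comp tendsto_natCast_atTop_atTop
    have h5 : Tendsto (fun n : ℕ => -2 * (n : ℝ) ^ ((1 : ℝ) / 6) / 9) atTop atBot := by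
      have h6 := h4.const_mul_atTop_of_neg (show (-2 / 9 : ℝ) < 0 by norm_num)
      exact h6.congr fun n => by ring
    have h3 : Tendsto (fun n : ℕ => Real.exp (-2 * (n : ℝ) ^ ((1 : ℝ) / 6) / 9)) atTop (nhds 0) :=
      Real.tendsto_exp_atBot.comp h5
    have htot := (h1.add (h2.const_mul (3 : ℝ))).add (h3.const_mul (3 : ℝ))
    simpa using htot
end

section
/- For n large, one has (1/C(n,2)) · Σ_{s ≥ 0, ℓ ≥ 0, s + ℓ ≤ n−2} [s·(n−s)/n + ℓ·(n−2−s−ℓ)/(n−s)] = (5/18)·n + O(1). Consequently, the two-stage partitioning algorithm (Chen's algorithm), in which each small element outside the first s positions causes one swap in the first stage and each large element in positions s+1,…,n−ℓ−1 causes one swap in the second stage, performs (5/18)·n + O(1) swaps on average per partitioning step, and the resulting dual pivot quicksort performs (6/5)·(5/18)·n·ln n + O(n) = (1/3)·n·ln n + O(n) swaps on average. -/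
open Finset

lemma csum_id (m : ℕ) : ∑ s ∈ Finset.range m, (s : ℝ) = m * (m - 1) / 2 := by
  induction m with
  | zero => simp
  | succ k ih => rw [Finset.sum_range_succ, ih]; push_cast; ring

lemma csum_sq (m : ℕ) : ∑ s ∈ Finset.range m, (s : ℝ) ^ 2 = m * (m - 1) * (2 * m - 1) / 6 := by
  induction m with
  | zero => simp
  | succ k ih => rw [Finset.sum_range_succ, ih]; push_cast; ring

lemma csum_cb (m : ℕ) : ∑ s ∈ Finset.range m, (s : ℝ) ^ 3 = m ^ 2 * (m - 1) ^ 2 / 4 := by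
  induction m with
  | zero => simp
  | succ k ih => rw [Finset.sum_range_succ, ih]; push_cast; ring

lemma inner_cube (k : ℕ) :
    ∑ l ∈ Finset.range k, (l : ℝ) * ((k : ℝ) - 1 - (l : ℝ))
      = (k : ℝ) * ((k : ℝ) - 1) * ((k : ℝ) - 2) / 6 := by
  have h : ∀ l : ℕ, (l : ℝ) * ((k : ℝ) - 1 - (l : ℝ))
      = ((k : ℝ) - 1) * (l : ℝ) - (l : ℝ) ^ 2 := fun l => by ring
  simp_rw [h, Finset.sum_sub_distrib, ← Finset.mul_sum, csum_id, csum_sq]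
  ring

lemma chen_inner_sum (k : ℕ) (a : ℝ) :
    ∑ l ∈ Finset.range k, (a + (l : ℝ) * ((k : ℝ) - 1 - (l : ℝ)) / ((k : ℝ) + 1))
      = (k : ℝ) * a + (k : ℝ) * ((k : ℝ) - 1) * ((k : ℝ) - 2) / (6 * ((k : ℝ) + 1)) := by
  rw [Finset.sum_add_distrib, Finset.sum_const, Finset.card_range, ← Finset.sum_div,
    inner_cube, nsmul_eq_mul]
  have hk : ((k : ℝ) + 1) ≠ 0 := by positivity
  field_simp

lemma poly_sum (m : ℕ) :
    ∑ s ∈ Finset.range m, ((m : ℝ) - s) * ((s : ℝ) * (((m : ℝ) + 1) - s))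
      = (m : ℝ) * ((m : ℝ) + 1) * ((m : ℝ) * ((m : ℝ) - 1) / 2)
        - (2 * (m : ℝ) + 1) * ((m : ℝ) * ((m : ℝ) - 1) * (2 * (m : ℝ) - 1) / 6)
        + (m : ℝ) ^ 2 * ((m : ℝ) - 1) ^ 2 / 4 := by
  have h : ∀ s : ℕ, ((m : ℝ) - s) * ((s : ℝ) * (((m : ℝ) + 1) - s))
      = (m : ℝ) * ((m : ℝ) + 1) * (s : ℝ) - (2 * (m : ℝ) + 1) * (s : ℝ) ^ 2 + (s : ℝ) ^ 3 :=
    fun s => by ring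
  simp_rw [h, Finset.sum_add_distrib, Finset.sum_sub_distrib, ← Finset.mul_sum,
    csum_id, csum_sq, csum_cb]

/-- the `F` function: value of the second-stage inner sum for block size `k`. -/
noncomputable def Fch (k : ℕ) : ℝ := (k : ℝ) * ((k : ℝ) - 1) * ((k : ℝ) - 2) / (6 * ((k : ℝ) + 1))

lemma Fch_succ (j : ℕ) :
    Fch (j + 1) = ((j : ℝ) ^ 2 - 2 * j + 3) / 6 - 1 / ((j : ℝ) + 2) := by
  have hj : (0 : ℝ) < (j : ℝ) + 2 := by positivity
  unfold Fch
  push_cast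
  field_simp
  ring

lemma csum_aux (m : ℕ) : ∑ j ∈ Finset.range m, (((j : ℝ) ^ 2 - 2 * j + 3) / 6)
    = ((m : ℝ) * ((m : ℝ) - 1) * (2 * (m : ℝ) - 1) / 6 - (m : ℝ) * ((m : ℝ) - 1)
        + 3 * (m : ℝ)) / 6 := by
  induction m with
  | zero => simp
  | succ k ih => rw [Finset.sum_range_succ, ih]; push_cast; ring

lemma main_sum (m : ℕ) :
    ∑ s ∈ Finset.range m, ∑ l ∈ Finset.range (m - s),
        ((s : ℝ) * (((m : ℝ) + 1) - s) / ((m : ℝ) + 1)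
          + (l : ℝ) * (((m : ℝ) + 1) - 2 - s - l) / (((m : ℝ) + 1) - s))
      = ((m : ℝ) * ((m : ℝ) + 1) * ((m : ℝ) * ((m : ℝ) - 1) / 2)
          - (2 * (m : ℝ) + 1) * ((m : ℝ) * ((m : ℝ) - 1) * (2 * (m : ℝ) - 1) / 6)
          + (m : ℝ) ^ 2 * ((m : ℝ) - 1) ^ 2 / 4) / ((m : ℝ) + 1)
        + ((m : ℝ) * ((m : ℝ) - 1) * (2 * (m : ℝ) - 1) / 6 - (m : ℝ) * ((m : ℝ) - 1)
            + 3 * (m : ℝ)) / 6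
        - ∑ j ∈ Finset.range m, 1 / ((j : ℝ) + 2) := by
  have step1 : ∀ s ∈ Finset.range m,
      ∑ l ∈ Finset.range (m - s),
        ((s : ℝ) * (((m : ℝ) + 1) - s) / ((m : ℝ) + 1)
          + (l : ℝ) * (((m : ℝ) + 1) - 2 - s - l) / (((m : ℝ) + 1) - s))
      = ((m : ℝ) - s) * ((s : ℝ) * (((m : ℝ) + 1) - s)) / ((m : ℝ) + 1) + Fch (m - s) := by
    intro s hs
    have hsm : s ≤ m := (Finset.mem_range.mp hs).le
    have hk : ((m - s : ℕ) : ℝ) = (m : ℝ) - s := by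
      push_cast [Nat.cast_sub hsm]; ring
    have hcongr : ∀ l ∈ Finset.range (m - s),
        ((s : ℝ) * (((m : ℝ) + 1) - s) / ((m : ℝ) + 1)
          + (l : ℝ) * (((m : ℝ) + 1) - 2 - s - l) / (((m : ℝ) + 1) - s))
        = ((s : ℝ) * (((m : ℝ) + 1) - s) / ((m : ℝ) + 1)
            + (l : ℝ) * (((m - s : ℕ) : ℝ) - 1 - (l : ℝ)) / (((m - s : ℕ) : ℝ) + 1)) := by
      intro l _
      rw [hk]; ring_nf
    rw [Finset.sum_congr rfl hcongr, chen_inner_sum, hk]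
    unfold Fch
    rw [hk]
    ring
  rw [Finset.sum_congr rfl step1, Finset.sum_add_distrib, ← Finset.sum_div, poly_sum]
  have hrefl : ∑ s ∈ Finset.range m, Fch (m - s)
      = ∑ j ∈ Finset.range m, Fch (j + 1) := by
    rw [← Finset.sum_range_reflect (fun j => Fch (j + 1)) m]
    exact Finset.sum_congr rfl fun s hs => by
      have : m - 1 - s + 1 = m - s := by
        have := Finset.mem_range.mp hs; omega
      rw [this]
  rw [hrefl]
  have h2 : ∑ j ∈ Finset.range m, Fch (j + 1)
      = ∑ j ∈ Finset.range m, (((j : ℝ) ^ 2 - 2 * j + 3) / 6 - 1 / ((j : ℝ) + 2)) :=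
    Finset.sum_congr rfl fun j _ => Fch_succ j
  rw [h2, Finset.sum_sub_distrib]
  have h3 := csum_aux m
  rw [h3]
  ring

/-- Average swap count of Chen's two-stage partitioning algorithm:
`(1/C(n,2)) · Σ_{s+ℓ ≤ n−2} (s·(n−s)/n + ℓ·(n−2−s−ℓ)/(n−s)) = (5/18)·n + O(1)`. -/
theorem chen_swap_count :
    ∃ K : ℝ, ∀ n : ℕ, 2 ≤ n →
      |1 / (n.choose 2 : ℝ) *
          (∑ s ∈ Finset.range (n - 1), ∑ l ∈ Finset.range (n - 1 - s),
            ((s : ℝ) * ((n : ℝ) - (s : ℝ)) / (n : ℝ) +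
              (l : ℝ) * ((n : ℝ) - 2 - (s : ℝ) - (l : ℝ)) / ((n : ℝ) - (s : ℝ)))) -
        (5 / 18) * (n : ℝ)| ≤ K := by
  refine ⟨6, fun n hn => ?_⟩
  obtain ⟨m, rfl⟩ : ∃ m, n = m + 1 := ⟨n - 1, by omega⟩
  have hm : 1 ≤ m := by omega
  have hmr : (1 : ℝ) ≤ (m : ℝ) := by exact_mod_cast hm
  have hcast : ((m + 1 : ℕ) : ℝ) = (m : ℝ) + 1 := by push_cast; ring
  have hsub : m + 1 - 1 = m := by omega
  have hsub2 : ∀ s, m + 1 - 1 - s = m - s := fun s => by omega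
  have hsum : ∑ s ∈ Finset.range (m + 1 - 1), ∑ l ∈ Finset.range (m + 1 - 1 - s),
      ((s : ℝ) * (((m + 1 : ℕ) : ℝ) - (s : ℝ)) / ((m + 1 : ℕ) : ℝ) +
        (l : ℝ) * (((m + 1 : ℕ) : ℝ) - 2 - (s : ℝ) - (l : ℝ)) / (((m + 1 : ℕ) : ℝ) - (s : ℝ)))
      = ∑ s ∈ Finset.range m, ∑ l ∈ Finset.range (m - s),
        ((s : ℝ) * (((m : ℝ) + 1) - s) / ((m : ℝ) + 1)
          + (l : ℝ) * (((m : ℝ) + 1) - 2 - s - l) / (((m : ℝ) + 1) - s)) := by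
    rw [hsub]
    exact Finset.sum_congr rfl fun s _ => by rw [hcast]
  rw [hsum, main_sum]
  set h : ℝ := ∑ j ∈ Finset.range m, 1 / ((j : ℝ) + 2) with hh
  have hh0 : 0 ≤ h := Finset.sum_nonneg fun j _ => by positivity
  have hh1 : h ≤ (m : ℝ) / 2 := by
    calc h ≤ ∑ _j ∈ Finset.range m, (1 / 2 : ℝ) := by
            refine Finset.sum_le_sum fun j _ => ?_
            rw [div_le_div_iff₀ (by positivity) (by norm_num)]
            have : (0 : ℝ) ≤ (j : ℝ) := Nat.cast_nonneg j
            linarith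
      _ = (m : ℝ) / 2 := by
            rw [Finset.sum_const, Finset.card_range, nsmul_eq_mul]; ring
  have hchoose : ((m + 1 : ℕ).choose 2 : ℝ) = ((m : ℝ) + 1) * (m : ℝ) / 2 := by
    rw [Nat.cast_choose_two]
    push_cast
    ring
  have hm0 : (0 : ℝ) < (m : ℝ) := by linarith
  have hm1 : (0 : ℝ) < (m : ℝ) + 1 := by linarith
  have key : 1 / ((m + 1 : ℕ).choose 2 : ℝ) *
      (((m : ℝ) * ((m : ℝ) + 1) * ((m : ℝ) * ((m : ℝ) - 1) / 2)
          - (2 * (m : ℝ) + 1) * ((m : ℝ) * ((m : ℝ) - 1) * (2 * (m : ℝ) - 1) / 6)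
          + (m : ℝ) ^ 2 * ((m : ℝ) - 1) ^ 2 / 4) / ((m : ℝ) + 1)
        + ((m : ℝ) * ((m : ℝ) - 1) * (2 * (m : ℝ) - 1) / 6 - (m : ℝ) * ((m : ℝ) - 1)
            + 3 * (m : ℝ)) / 6 - h) - 5 / 18 * ((m + 1 : ℕ) : ℝ)
      = (-8 * ((m : ℝ) + 1) ^ 2 + 23 * ((m : ℝ) + 1) - 15 - 18 * h)
          / (9 * ((m : ℝ) + 1) * (m : ℝ)) := by
    rw [hchoose, hcast]
    field_simp
    ring
  rw [key, abs_le]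
  have hden : (0 : ℝ) < 9 * ((m : ℝ) + 1) * (m : ℝ) := by positivity
  constructor
  · rw [le_div_iff₀ hden]
    nlinarith [sq_nonneg ((m : ℝ) - 1), sq_nonneg (m : ℝ)]
  · rw [div_le_iff₀ hden]
    nlinarith [sq_nonneg ((m : ℝ) - 1), sq_nonneg (m : ℝ)]
end
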